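/- arXiv:2306.07587 — 7 statements merged into one kernel-verified Lean document; each statement's English description precedes it below -/
import Mathlib

section
/- Let p be a real polynomial in n variables, homogeneous of degree d, hyperbolic in direction e ∈ ℝⁿ, and let L be a two-dimensional linear subspace of ℝⁿ that contains e. Then there exists a linear map M : L → ℝᵈ such that Me = (1,1,…,1) and for all x ∈ L, p(x) = p(e) · ∏_{i=1}^{d} (Mx)_i. -/
open scoped BigOperators

/-- The univariate polynomial `t ↦ p(t • e - x)` associated to a multivariate polynomial `p`,
a direction `e` and a point `x`. -/
noncomputable def hypCharPoly {n : ℕ} (p : MvPolynomial (Fin n) ℝ) (e x : Fin n → ℝ) :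
    Polynomial ℝ :=
  MvPolynomial.aeval (fun i => Polynomial.C (e i) * Polynomial.X - Polynomial.C (x i)) p

/-- `p` is a homogeneous polynomial of degree `d`, hyperbolic in direction `e`:
`p(e) ≠ 0` and for every `x` the polynomial `t ↦ p(t • e - x)` has `d` real roots
counted with multiplicity. -/
def IsHyperbolicPoly {n : ℕ} (p : MvPolynomial (Fin n) ℝ) (e : Fin n → ℝ) (d : ℕ) : Prop :=
  p.IsHomogeneous d ∧ MvPolynomial.eval e p ≠ 0 ∧
    ∀ x : Fin n → ℝ, Multiset.card (hypCharPoly p e x).roots = d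

/-- The (closed) hyperbolicity cone `Λ₊`: all hyperbolic eigenvalues are nonnegative. -/
def hypConeClosed {n : ℕ} (p : MvPolynomial (Fin n) ℝ) (e : Fin n → ℝ) : Set (Fin n → ℝ) :=
  {x | ∀ r ∈ (hypCharPoly p e x).roots, (0:ℝ) ≤ r}

/-- The open hyperbolicity cone `Λ₊₊`: all hyperbolic eigenvalues are positive. -/
def hypConeOpen {n : ℕ} (p : MvPolynomial (Fin n) ℝ) (e : Fin n → ℝ) : Set (Fin n → ℝ) :=
  {x | ∀ r ∈ (hypCharPoly p e x).roots, (0:ℝ) < r}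

/-- The gradient of `f(x) = -ln p(x)`, namely `g(x)ᵢ = -(∂ᵢ p)(x) / p(x)`. -/
noncomputable def gradNegLog {n : ℕ} (p : MvPolynomial (Fin n) ℝ) (x : Fin n → ℝ) :
    Fin n → ℝ :=
  fun i => -(MvPolynomial.eval x (MvPolynomial.pderiv i p)) / MvPolynomial.eval x p

/-- The Hessian of `f(x) = -ln p(x)`, namely
`H(x)ᵢⱼ = (∂ᵢp)(x)(∂ⱼp)(x)/p(x)² - (∂ᵢ∂ⱼp)(x)/p(x)`. -/
noncomputable def hessNegLog {n : ℕ} (p : MvPolynomial (Fin n) ℝ) (x : Fin n → ℝ) :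
    Matrix (Fin n) (Fin n) ℝ :=
  Matrix.of fun i j =>
    MvPolynomial.eval x (MvPolynomial.pderiv i p) * MvPolynomial.eval x (MvPolynomial.pderiv j p)
        / (MvPolynomial.eval x p) ^ 2
      - MvPolynomial.eval x (MvPolynomial.pderiv i (MvPolynomial.pderiv j p))
        / MvPolynomial.eval x p

/-- The local inner product `⟨u, v⟩_{e'} = uᵀ H(e') v`. -/
noncomputable def localIP {n : ℕ} (p : MvPolynomial (Fin n) ℝ) (e' u v : Fin n → ℝ) : ℝ :=
  ∑ i, ∑ j, u i * hessNegLog p e' i j * v j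

/-- The local norm `‖v‖_{e'} = ⟨v, v⟩_{e'}^{1/2}`. -/
noncomputable def localNorm {n : ℕ} (p : MvPolynomial (Fin n) ℝ) (e' v : Fin n → ℝ) : ℝ :=
  Real.sqrt (localIP p e' v v)

/-- The closed quadratic cone `K_{e'}(α) = {x : ⟨e', x⟩_{e'} ≥ α ‖x‖_{e'}}`. -/
noncomputable def quadCone {n : ℕ} (p : MvPolynomial (Fin n) ℝ) (e' : Fin n → ℝ) (α : ℝ) :
    Set (Fin n → ℝ) :=
  {x | α * localNorm p e' x ≤ localIP p e' e' x}

/-- The hyperbolicity cone is regular: it contains no nonzero linear subspace. -/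
def IsRegularCone {n : ℕ} (p : MvPolynomial (Fin n) ℝ) (e : Fin n → ℝ) : Prop :=
  ∀ W : Submodule ℝ (Fin n → ℝ), (W : Set (Fin n → ℝ)) ⊆ hypConeClosed p e → W = ⊥

/-!
Pick a basis `(e, w)` of `L`. The restriction `P(a, b) = p(a e + b w)` is a binary form of
degree `d` whose dehomogenisation `P(t, 1) = p(t e + w)` is the characteristic polynomial of
`-w`; by hyperbolicity it has `d` real roots `μᵢ`, so `P(t, 1) = c ∏ (t - μᵢ)`. A binary form is
the homogenisation of its dehomogenisation, hence `P(a, b) = c ∏ (a - μᵢ b)`, and `(a, b) = (1, 0)`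
gives `c = p(e)`. The map `M` sends `a e + b w` to `(a - μᵢ b)ᵢ`.
-/

lemma Multiset.exists_eq_map_univ_val {α : Type*} {d : ℕ} (s : Multiset α)
    (hs : Multiset.card s = d) : ∃ μ : Fin d → α, s = Finset.univ.val.map μ := by
  obtain ⟨l, rfl⟩ := Quot.exists_rep s
  obtain rfl : l.length = d := hs
  exact ⟨l.get, by simp⟩

lemma Module.exists_basis_fin_two_apply_zero {K V : Type*} [Field K] [AddCommGroup V]
    [Module K V] (hV : Module.finrank K V = 2) {u : V} (hu : u ≠ 0) :
    ∃ B : Module.Basis (Fin 2) K V, B 0 = u := by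
  obtain ⟨v, hv⟩ : ∃ v : V, v ∉ Submodule.span K {u} := by
    by_contra! h
    have := finrank_span_singleton (K := K) hu
    rw [Submodule.eq_top_iff'.mpr h, finrank_top, hV] at this
    exact absurd this (by norm_num)
  have hli : LinearIndependent K ![u, v] :=
    (LinearIndependent.pair_iff' hu).mpr fun a ha => hv (Submodule.mem_span_singleton.mpr ⟨a, ha⟩)
  exact ⟨basisOfLinearIndependentOfCardEqFinrank hli (by simp [hV]), by simp⟩

namespace MvPolynomial

lemma IsHomogeneous.eval_zero {σ R : Type*} [CommSemiring R] {p : MvPolynomial σ R} {d : ℕ}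
    (hp : p.IsHomogeneous d) (hd : d ≠ 0) : eval 0 p = 0 := by
  rw [MvPolynomial.eval_zero, constantCoeff_eq]
  exact hp.coeff_eq_zero (by simpa using hd.symm)

variable {n d : ℕ} {p : MvPolynomial (Fin n) ℝ}

noncomputable def restrictPlane (p : MvPolynomial (Fin n) ℝ) (u v : Fin n → ℝ) :
    MvPolynomial (Fin 2) ℝ :=
  aeval (fun i => C (u i) * X 0 + C (v i) * X 1) p

lemma eval_restrictPlane (u v : Fin n → ℝ) (a b : ℝ) :
    eval ![a, b] (p.restrictPlane u v) = eval (a • u + b • v) p := by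
  change aeval ![a, b] (aeval _ p) = aeval _ p
  rw [comp_aeval_apply]
  congr 1
  ext i
  simp [mul_comm]

lemma IsHomogeneous.restrictPlane (hp : p.IsHomogeneous d) (u v : Fin n → ℝ) :
    (p.restrictPlane u v).IsHomogeneous d := by
  simpa only [MvPolynomial.restrictPlane, one_mul] using
    hp.aeval _ fun i => (isHomogeneous_C_mul_X (u i) 0).add (isHomogeneous_C_mul_X (v i) 1)

lemma aeval_X_one_restrictPlane (e w : Fin n → ℝ) :
    aeval ![Polynomial.X, 1] (p.restrictPlane e w) = hypCharPoly p e (-w) := by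
  rw [restrictPlane, comp_aeval_apply, hypCharPoly]
  congr 1
  ext i : 1
  simp [sub_eq_add_neg, Polynomial.C_neg]

lemma IsHomogeneous.natDegree_hypCharPoly_le (hp : p.IsHomogeneous d) (e x : Fin n → ℝ) :
    (hypCharPoly p e x).natDegree ≤ d := by
  refine (aeval_natDegree_le p hp.totalDegree_le _ fun i => ?_).trans_eq (mul_one d)
  rw [Polynomial.natDegree_sub_C]
  exact (Polynomial.natDegree_C_mul_le _ _).trans Polynomial.natDegree_X_le

lemma restrictPlane_eq_C_mul_prod (hp : p.IsHomogeneous d) (e w : Fin n → ℝ)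
    (hroots : Multiset.card (hypCharPoly p e (-w)).roots = d) :
    ∃ μ : Fin d → ℝ, p.restrictPlane e w = C (eval e p) * ∏ i, (X 0 - C (μ i) * X 1) := by
  set q := hypCharPoly p e (-w)
  obtain ⟨μ, hμ⟩ := q.roots.exists_eq_map_univ_val hroots
  have hq : q = Polynomial.C q.leadingCoeff * ∏ i, (Polynomial.X - Polynomial.C (μ i)) := by
    have hdeg : Multiset.card q.roots = q.natDegree :=
      le_antisymm (Polynomial.card_roots' q) (hroots ▸ hp.natDegree_hypCharPoly_le e (-w))
    calc q = Polynomial.C q.leadingCoeff * (q.roots.map (Polynomial.X - Polynomial.C ·)).prod :=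
          (Polynomial.C_leadingCoeff_mul_prod_multiset_X_sub_C hdeg).symm
      _ = _ := by rw [hμ, Multiset.map_map]; rfl
  have hF : (C q.leadingCoeff * ∏ i, (X 0 - C (μ i) * X 1) :
      MvPolynomial (Fin 2) ℝ).IsHomogeneous d := by
    simpa using (IsHomogeneous.prod Finset.univ _ (fun _ => 1) fun i _ =>
      (isHomogeneous_X ℝ 0).sub (isHomogeneous_C_mul_X (μ i) 1)).C_mul q.leadingCoeff
  have hpF : p.restrictPlane e w = C q.leadingCoeff * ∏ i, (X 0 - C (μ i) * X 1) := by
    rw [← Polynomial.homogenize_eq_of_isHomogeneous (hp.restrictPlane e w)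
      (aeval_X_one_restrictPlane e w)]
    refine Polynomial.homogenize_eq_of_isHomogeneous hF ?_
    change _ = q
    conv_rhs => rw [hq]
    simp
  have hlead : q.leadingCoeff = eval e p := by
    have := congrArg (eval ![1, 0]) hpF
    rw [eval_restrictPlane] at this
    simpa using this.symm
  exact ⟨μ, hlead ▸ hpF⟩

end MvPolynomial

/-- Helton–Vinnikov / Lemma 8.2 in RS14.
If `p` is homogeneous of degree `d`, hyperbolic in direction `e`, and `L` is a two-dimensional
subspace of `ℝⁿ` containing `e`, then there is a linear map `M : L → ℝᵈ` with `Me = (1,…,1)`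
and `p(x) = p(e) ⬝ ∏ᵢ (Mx)ᵢ` for all `x ∈ L`. -/
theorem stmt0 {n d : ℕ} (hd : 1 ≤ d) (p : MvPolynomial (Fin n) ℝ) (e : Fin n → ℝ)
    (hp : IsHyperbolicPoly p e d)
    (L : Submodule ℝ (Fin n → ℝ)) (hL : Module.finrank ℝ L = 2) (heL : e ∈ L) :
    ∃ M : L →ₗ[ℝ] (Fin d → ℝ),
      M ⟨e, heL⟩ = (fun _ => (1 : ℝ)) ∧
      ∀ x : L, MvPolynomial.eval (x : Fin n → ℝ) p =
        MvPolynomial.eval e p * ∏ i, M x i := by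
  obtain ⟨hhom, hpe, hroots⟩ := hp
  have he : (⟨e, heL⟩ : L) ≠ 0 := by
    rw [ne_eq, Submodule.mk_eq_zero]
    rintro rfl
    exact hpe (hhom.eval_zero (by omega))
  obtain ⟨B, hB⟩ := Module.exists_basis_fin_two_apply_zero hL he
  set w : Fin n → ℝ := ↑(B 1)
  obtain ⟨μ, hμ⟩ := MvPolynomial.restrictPlane_eq_C_mul_prod hhom e w (hroots (-w))
  refine ⟨LinearMap.pi fun i => B.coord 0 - μ i • B.coord 1, ?_, fun x => ?_⟩
  · ext i
    simp [← hB]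
  · have hx : (x : Fin n → ℝ) = B.repr x 0 • e + B.repr x 1 • w := by
      conv_lhs => rw [← B.sum_repr x]
      simp only [Fin.sum_univ_two, Submodule.coe_add, Submodule.coe_smul, hB, w]
    rw [hx, ← MvPolynomial.eval_restrictPlane, hμ]
    simp
end

section
/- Let p be a real polynomial in n variables, homogeneous of degree d, hyperbolic in direction e ∈ ℝⁿ, let L be a two-dimensional linear subspace of ℝⁿ containing e, and let M : L → ℝᵈ be a linear map with Me = (1,…,1) and p(x) = p(e)·∏_{i=1}^{d}(Mx)_i for all x ∈ L. Then Λ₊₊ ∩ L = { x ∈ L : (Mx)_i > 0 for every i ∈ [d] }. -/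
open scoped BigOperators

/-! For `x ∈ L` the whole line `t • e - x` lies in `L`, and `M (t • e - x) = t • 1 - M x`, so the
factorization gives `p(t • e - x) = p(e) ∏ᵢ (t - (M x)ᵢ)`: the hyperbolic eigenvalues of `x` are
exactly the coordinates of `M x`. -/

open Polynomial

lemma hypCharPoly_eval {n : ℕ} (p : MvPolynomial (Fin n) ℝ) (e x : Fin n → ℝ) (t : ℝ) :
    (hypCharPoly p e x).eval t = MvPolynomial.eval (t • e - x) p := by
  rw [hypCharPoly, ← coe_aeval_eq_eval, MvPolynomial.comp_aeval_apply,
    MvPolynomial.aeval_eq_eval]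
  congr 2
  funext i
  simp only [map_sub, map_mul, aeval_C, aeval_X, Algebra.algebraMap_self, RingHom.id_apply,
    Pi.sub_apply, Pi.smul_apply, smul_eq_mul, mul_comm]

lemma roots_C_mul_prod_X_sub_C {R ι : Type*} [CommRing R] [IsDomain R] [Fintype ι]
    {c : R} (hc : c ≠ 0) (a : ι → R) :
    (C c * ∏ i, (X - C (a i))).roots = Finset.univ.val.map a := by
  rw [roots_C_mul _ hc, ← roots_multiset_prod_X_sub_C (Finset.univ.val.map a), Multiset.map_map]
  rfl

lemma mem_hypConeOpen_iff_of_hypCharPoly_eq {n : ℕ} {ι : Type*} [Fintype ι]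
    {p : MvPolynomial (Fin n) ℝ} {e x : Fin n → ℝ} {c : ℝ} (hc : c ≠ 0) {a : ι → ℝ}
    (h : hypCharPoly p e x = C c * ∏ i, (X - C (a i))) :
    x ∈ hypConeOpen p e ↔ ∀ i, 0 < a i := by
  simp only [hypConeOpen, Set.mem_ofPred_eq, h, roots_C_mul_prod_X_sub_C hc, Multiset.mem_map,
    Finset.mem_val, Finset.mem_univ, true_and, forall_exists_index, forall_apply_eq_imp_iff]

lemma hypCharPoly_eq_C_mul_prod {n : ℕ} {ι : Type*} [Fintype ι] {p : MvPolynomial (Fin n) ℝ}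
    {e : Fin n → ℝ} {L : Submodule ℝ (Fin n → ℝ)} (heL : e ∈ L) {M : L →ₗ[ℝ] (ι → ℝ)}
    (hMe : M ⟨e, heL⟩ = fun _ => (1 : ℝ))
    (hMp : ∀ x : L, MvPolynomial.eval (x : Fin n → ℝ) p = MvPolynomial.eval e p * ∏ i, M x i)
    (x : L) :
    hypCharPoly p e x = C (MvPolynomial.eval e p) * ∏ i, (X - C (M x i)) := by
  refine Polynomial.funext fun t => ?_
  have hL : t • e - (x : Fin n → ℝ) = ((t • ⟨e, heL⟩ - x : L) : Fin n → ℝ) := rfl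
  rw [hypCharPoly_eval, hL, hMp, map_sub, map_smul, hMe]
  simp [eval_prod]

theorem stmt1_general {n d : ℕ} (p : MvPolynomial (Fin n) ℝ) (e : Fin n → ℝ)
    (hp : IsHyperbolicPoly p e d)
    (L : Submodule ℝ (Fin n → ℝ)) (heL : e ∈ L)
    (M : L →ₗ[ℝ] (Fin d → ℝ))
    (hMe : M ⟨e, heL⟩ = fun _ => (1 : ℝ))
    (hMp : ∀ x : L, MvPolynomial.eval (x : Fin n → ℝ) p =
      MvPolynomial.eval e p * ∏ i, M x i) :
    ∀ x : L, ((x : Fin n → ℝ) ∈ hypConeOpen p e ↔ ∀ i, 0 < M x i) := fun x =>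
  mem_hypConeOpen_iff_of_hypCharPoly_eq hp.2.1 (hypCharPoly_eq_C_mul_prod heL hMe hMp x)

/-- Lemma 8.3 in RS14.
With `M : L → ℝᵈ` as in the Helton–Vinnikov style factorization,
`Λ₊₊ ∩ L = {x ∈ L : (Mx)ᵢ > 0 for all i}`. -/
theorem stmt1 {n d : ℕ} (hd : 1 ≤ d) (p : MvPolynomial (Fin n) ℝ) (e : Fin n → ℝ)
    (hp : IsHyperbolicPoly p e d)
    (L : Submodule ℝ (Fin n → ℝ)) (hL : Module.finrank ℝ L = 2) (heL : e ∈ L)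
    (M : L →ₗ[ℝ] (Fin d → ℝ))
    (hMe : M ⟨e, heL⟩ = fun _ => (1 : ℝ))
    (hMp : ∀ x : L, MvPolynomial.eval (x : Fin n → ℝ) p =
      MvPolynomial.eval e p * ∏ i, M x i) :
    ∀ x : L, ((x : Fin n → ℝ) ∈ hypConeOpen p e ↔ ∀ i, 0 < M x i) :=
  stmt1_general p e hp L heL M hMe hMp
end

section
/- Let p be a real polynomial in n variables, homogeneous of degree d, hyperbolic in direction e ∈ ℝⁿ, with hyperbolicity cone Λ₊ regular (containing no nonzero linear subspace). Let L be a two-dimensional linear subspace of ℝⁿ containing e and let M : L → ℝᵈ be a linear map with Me = (1,…,1) and p(x) = p(e)·∏_{i=1}^{d}(Mx)_i for all x ∈ L. Then M is injective on L. -/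
open scoped BigOperators

lemma eval_hypCharPoly {n : ℕ} (p : MvPolynomial (Fin n) ℝ) (e x : Fin n → ℝ) (t : ℝ) :
    Polynomial.eval t (hypCharPoly p e x) = MvPolynomial.eval (fun i => e i * t - x i) p := by
  unfold hypCharPoly
  induction p using MvPolynomial.induction_on with
  | C a => simp
  | add p q hp hq => simp [hp, hq]
  | mul_X p i hp => simp [hp]

/-- Lemma 8.4 in RS14.
If the hyperbolicity cone is regular, the map `M : L → ℝᵈ` from the factorization is injective. -/
theorem stmt2 {n d : ℕ} (hd : 1 ≤ d) (p : MvPolynomial (Fin n) ℝ) (e : Fin n → ℝ)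
    (hp : IsHyperbolicPoly p e d) (hreg : IsRegularCone p e)
    (L : Submodule ℝ (Fin n → ℝ)) (hL : Module.finrank ℝ L = 2) (heL : e ∈ L)
    (M : L →ₗ[ℝ] (Fin d → ℝ))
    (hMe : M ⟨e, heL⟩ = fun _ => (1 : ℝ))
    (hMp : ∀ x : L, MvPolynomial.eval (x : Fin n → ℝ) p =
      MvPolynomial.eval e p * ∏ i, M x i) :
    Function.Injective M := by
  have key : ∀ x : L, M x = 0 → x = 0 := by
    intro x hx
    have hsub : (Submodule.span ℝ {(x : Fin n → ℝ)} : Set (Fin n → ℝ)) ⊆ hypConeClosed p e := by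
      intro y hy
      rw [SetLike.mem_coe, Submodule.mem_span_singleton] at hy
      obtain ⟨s, rfl⟩ := hy
      -- compute the characteristic polynomial on this line
      have hpoly : hypCharPoly p e (s • (x : Fin n → ℝ)) =
          Polynomial.C (MvPolynomial.eval e p) * Polynomial.X ^ d := by
        apply Polynomial.funext
        intro t
        rw [eval_hypCharPoly]
        have hmem : (fun i => e i * t - (s • (x : Fin n → ℝ)) i) =
            ((t • (⟨e, heL⟩ : L) - s • x : L) : Fin n → ℝ) := by
          funext i
          simp only [Submodule.coe_sub, Submodule.coe_smul, Pi.sub_apply, Pi.smul_apply,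
            smul_eq_mul]
          ring
        rw [hmem, hMp]
        have hM : M (t • (⟨e, heL⟩ : L) - s • x) = fun _ => t := by
          rw [map_sub, map_smul, map_smul, hMe, hx]
          funext i
          simp
        rw [hM]
        simp [Finset.prod_const]
      intro r hr
      rw [hpoly] at hr
      have hpe : MvPolynomial.eval e p ≠ 0 := hp.2.1
      have hd0 : (Polynomial.X : Polynomial ℝ) ^ d ≠ 0 := pow_ne_zero _ Polynomial.X_ne_zero
      rw [Polynomial.roots_C_mul _ hpe, Polynomial.roots_pow, Polynomial.roots_X] at hr
      simp only [Multiset.mem_nsmul, Multiset.mem_singleton] at hr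
      rcases hr with ⟨-, rfl⟩
      exact le_refl 0
    have hbot := hreg _ hsub
    have : (x : Fin n → ℝ) = 0 := by
      have hx0 : (x : Fin n → ℝ) ∈ Submodule.span ℝ {(x : Fin n → ℝ)} :=
        Submodule.mem_span_singleton_self _
      rw [hbot] at hx0
      simpa using hx0
    exact Subtype.ext this
  intro a b hab
  have : M (a - b) = 0 := by rw [map_sub, hab, sub_self]
  exact sub_eq_zero.mp (key _ this)
end

section
/- Let p be a real polynomial in n variables, homogeneous of degree d, hyperbolic in direction e ∈ ℝⁿ, let L be a two-dimensional linear subspace of ℝⁿ containing e, and let M : L → ℝᵈ be a linear map with Me = (1,…,1) and p(x) = p(e)·∏_{i=1}^{d}(Mx)_i for all x ∈ L. Then for all u, v ∈ L: ⟨g(e), v⟩ = −∑_{i=1}^{d}(Mv)_i and uᵀH(e)v = (Mu)ᵀ(Mv), where g(e) and H(e) are the gradient and Hessian of f(x) = −ln p(x) at e. -/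
/-!
Along a line `t ↦ e + t w` with `w ∈ L` the factorization reads
`p(e + t w) = p(e) ∏ᵢ (1 + t (Mw)ᵢ)`, so the first two Taylor coefficients of `p` there are
`p(e) ∑ᵢ (Mw)ᵢ` and `p(e) ((∑ᵢ (Mw)ᵢ)² - ∑ᵢ (Mw)ᵢ²) / 2`. These are the first and second
directional derivatives of `p` at `e` in direction `w`; polarization gives the mixed second
derivative in directions `u, v ∈ L`, and substituting into `g = -∇p / p` and
`H = ∇p ∇pᵀ / p² - ∇²p / p` gives both identities.
-/

open scoped BigOperators

namespace MvPolynomial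

variable {σ R : Type*} [CommSemiring R]

theorem pderiv_pderiv_comm (i j : σ) (q : MvPolynomial σ R) :
    pderiv i (pderiv j q) = pderiv j (pderiv i q) := by
  induction q using MvPolynomial.induction_on with
  | C a => simp
  | add f g hf hg => simp only [map_add, hf, hg]
  | mul_X f k hf =>
    have hX : ∀ a b : σ, pderiv a (pderiv b (X k : MvPolynomial σ R)) = 0 := fun a b => by
      classical
      by_cases h : k = b <;> simp [pderiv_X, h]
    simp only [pderiv_mul, map_add, hX, hf, mul_zero, add_zero]
    ring

noncomputable def restrictLine (x v : σ → R) : MvPolynomial σ R →ₐ[R] Polynomial R :=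
  aeval fun i => Polynomial.C (x i) + Polynomial.C (v i) * Polynomial.X

theorem eval_restrictLine (x v : σ → R) (q : MvPolynomial σ R) (t : R) :
    (restrictLine x v q).eval t = eval (x + t • v) q := by
  rw [restrictLine, aeval_def, ← Polynomial.coe_evalRingHom, eval₂_comp_left, eval]
  congr 1
  · ext; simp
  · funext i; simp [mul_comm (v i)]

theorem coeff_restrictLine_zero (x v : σ → R) (q : MvPolynomial σ R) :
    (restrictLine x v q).coeff 0 = eval x q := by
  simp [Polynomial.coeff_zero_eq_eval_zero, eval_restrictLine]

variable [Fintype σ]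

noncomputable def dirDeriv (v : σ → R) : Derivation R (MvPolynomial σ R) (MvPolynomial σ R) :=
  ∑ i, v i • pderiv i

theorem dirDeriv_apply (v : σ → R) (q : MvPolynomial σ R) :
    dirDeriv v q = ∑ i, v i • pderiv i q := by
  rw [dirDeriv, ← Derivation.coeFnAddMonoidHom_apply, map_sum, Finset.sum_apply]
  rfl

theorem dirDeriv_add (u v : σ → R) : dirDeriv (u + v) = dirDeriv u + dirDeriv v := by
  simp only [dirDeriv, Pi.add_apply, add_smul, Finset.sum_add_distrib]

theorem dirDeriv_comm (u v : σ → R) (q : MvPolynomial σ R) :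
    dirDeriv u (dirDeriv v q) = dirDeriv v (dirDeriv u q) := by
  simp only [dirDeriv_apply, map_sum]
  rw [Finset.sum_comm]
  refine Finset.sum_congr rfl fun i _ => Finset.sum_congr rfl fun j _ => ?_
  rw [Derivation.map_smul, Derivation.map_smul, pderiv_pderiv_comm, smul_comm]

theorem eval_dirDeriv (x v : σ → R) (q : MvPolynomial σ R) :
    eval x (dirDeriv v q) = ∑ i, v i * eval x (pderiv i q) := by
  simp [dirDeriv_apply]

theorem eval_dirDeriv_dirDeriv (x u v : σ → R) (q : MvPolynomial σ R) :
    eval x (dirDeriv u (dirDeriv v q)) =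
      ∑ i, ∑ j, u i * v j * eval x (pderiv i (pderiv j q)) := by
  simp only [dirDeriv_apply, map_sum, Derivation.map_smul, smul_eval, Finset.mul_sum]
  rw [Finset.sum_comm]
  refine Finset.sum_congr rfl fun i _ => Finset.sum_congr rfl fun j _ => ?_
  ring

theorem dirDeriv_X (v : σ → R) (k : σ) : dirDeriv v (X k) = C (v k) := by
  classical
  simp [dirDeriv_apply, pderiv_X, Pi.single_apply, Algebra.smul_def]

theorem derivative_restrictLine (x v : σ → R) (q : MvPolynomial σ R) :
    Polynomial.derivative (restrictLine x v q) = restrictLine x v (dirDeriv v q) := by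
  induction q using MvPolynomial.induction_on with
  | C a => simp [restrictLine, derivation_C]
  | add f g hf hg => simp only [map_add, hf, hg]
  | mul_X f k hf =>
    have hX : Polynomial.derivative (restrictLine x v (X k)) = restrictLine x v (C (v k)) := by
      simp [restrictLine]
    rw [Derivation.leibniz, dirDeriv_X, map_mul, Polynomial.derivative_mul, hf, hX, map_add,
      smul_eq_mul, smul_eq_mul, map_mul, map_mul]
    ring

theorem coeff_restrictLine_one (x v : σ → R) (q : MvPolynomial σ R) :
    (restrictLine x v q).coeff 1 = eval x (dirDeriv v q) := by
  simpa [derivative_restrictLine, coeff_restrictLine_zero] using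
    (Polynomial.coeff_derivative (restrictLine x v q) 0).symm

theorem coeff_restrictLine_two (x v : σ → R) (q : MvPolynomial σ R) :
    (restrictLine x v q).coeff 2 * 2 = eval x (dirDeriv v (dirDeriv v q)) := by
  have h := Polynomial.coeff_derivative (restrictLine x v q) 1
  rw [derivative_restrictLine, coeff_restrictLine_one] at h
  rw [h]
  norm_num

end MvPolynomial

namespace Polynomial

variable {ι R : Type*}

theorem coeff_prod_one_add_C_mul_X_zero [CommSemiring R] (s : Finset ι) (a : ι → R) :
    (∏ i ∈ s, (1 + C (a i) * X)).coeff 0 = 1 := by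
  simp [coeff_zero_eq_eval_zero, eval_prod]

theorem coeff_prod_one_add_C_mul_X_one [CommSemiring R] (s : Finset ι) (a : ι → R) :
    (∏ i ∈ s, (1 + C (a i) * X)).coeff 1 = ∑ i ∈ s, a i := by
  induction s using Finset.cons_induction with
  | empty => simp [coeff_one]
  | cons i s hi ih =>
    rw [Finset.prod_cons, Finset.sum_cons, add_mul, one_mul, mul_assoc, coeff_add, coeff_C_mul,
      coeff_X_mul, ih, coeff_prod_one_add_C_mul_X_zero, mul_one, add_comm]

theorem coeff_prod_one_add_C_mul_X_two [CommRing R] (s : Finset ι) (a : ι → R) :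
    (∏ i ∈ s, (1 + C (a i) * X)).coeff 2 * 2 = (∑ i ∈ s, a i) ^ 2 - ∑ i ∈ s, a i ^ 2 := by
  induction s using Finset.cons_induction with
  | empty => simp [coeff_one]
  | cons i s hi ih =>
    rw [Finset.prod_cons, Finset.sum_cons, Finset.sum_cons, add_mul, one_mul, mul_assoc,
      coeff_add, coeff_C_mul, coeff_X_mul, coeff_prod_one_add_C_mul_X_one, add_mul, ih]
    ring

end Polynomial

open MvPolynomial

section LineFactorization

variable {σ ι R : Type*} [Fintype ι]

theorem restrictLine_eq_of_eval_eq_prod [Field R] [Infinite R] {p : MvPolynomial σ R}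
    {e : σ → R} {L : Submodule R (σ → R)} {M : L →ₗ[R] (ι → R)} (heL : e ∈ L)
    (hMe : M ⟨e, heL⟩ = fun _ => 1) (hMp : ∀ x : L, eval (x : σ → R) p = eval e p * ∏ i, M x i)
    (w : L) :
    restrictLine e w p =
      Polynomial.C (eval e p) * ∏ i, (1 + Polynomial.C (M w i) * Polynomial.X) := by
  refine Polynomial.funext fun t => ?_
  have hline : e + t • (w : σ → R) = ((⟨e, heL⟩ + t • w : L) : σ → R) := rfl
  rw [eval_restrictLine, hline, hMp, map_add, map_smul, hMe]
  simp only [Polynomial.eval_mul, Polynomial.eval_C, Polynomial.eval_prod, Polynomial.eval_add,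
    Polynomial.eval_one, Polynomial.eval_X, Pi.add_apply, Pi.smul_apply, smul_eq_mul, mul_comm t]

variable [Fintype σ]

theorem eval_dirDeriv_of_restrictLine_eq [CommRing R] {x v : σ → R} {q : MvPolynomial σ R}
    {c : R} {a : ι → R}
    (h : restrictLine x v q = Polynomial.C c * ∏ i, (1 + Polynomial.C (a i) * Polynomial.X)) :
    eval x (dirDeriv v q) = c * ∑ i, a i := by
  rw [← coeff_restrictLine_one, h, Polynomial.coeff_C_mul,
    Polynomial.coeff_prod_one_add_C_mul_X_one]

theorem eval_dirDeriv_dirDeriv_of_restrictLine_eq [CommRing R] {x v : σ → R}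
    {q : MvPolynomial σ R} {c : R} {a : ι → R}
    (h : restrictLine x v q = Polynomial.C c * ∏ i, (1 + Polynomial.C (a i) * Polynomial.X)) :
    eval x (dirDeriv v (dirDeriv v q)) = c * ((∑ i, a i) ^ 2 - ∑ i, a i ^ 2) := by
  rw [← coeff_restrictLine_two, h, Polynomial.coeff_C_mul, mul_assoc,
    Polynomial.coeff_prod_one_add_C_mul_X_two]

theorem eval_dirDeriv_dirDeriv_of_eval_eq_prod [Field R] [CharZero R] {p : MvPolynomial σ R}
    {e : σ → R} {L : Submodule R (σ → R)} {M : L →ₗ[R] (ι → R)} (heL : e ∈ L)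
    (hMe : M ⟨e, heL⟩ = fun _ => 1) (hMp : ∀ x : L, eval (x : σ → R) p = eval e p * ∏ i, M x i)
    (u v : L) :
    eval e (dirDeriv u (dirDeriv v p)) =
      eval e p * ((∑ i, M u i) * (∑ i, M v i) - ∑ i, M u i * M v i) := by
  have hsq (w : L) := eval_dirDeriv_dirDeriv_of_restrictLine_eq
    (restrictLine_eq_of_eval_eq_prod heL hMe hMp w)
  have hsum := hsq (u + v)
  simp only [Submodule.coe_add, dirDeriv_add, Derivation.add_apply, map_add] at hsum
  rw [dirDeriv_comm (v : σ → R) u, hsq u, hsq v] at hsum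
  simp only [Pi.add_apply, add_sq, Finset.sum_add_distrib, mul_assoc, ← Finset.mul_sum] at hsum
  apply mul_left_cancel₀ (two_ne_zero (α := R))
  linear_combination hsum

end LineFactorization

theorem sum_gradNegLog_mul {n : ℕ} (p : MvPolynomial (Fin n) ℝ) (x v : Fin n → ℝ) :
    ∑ i, gradNegLog p x i * v i = -eval x (dirDeriv v p) / eval x p := by
  simp only [gradNegLog, eval_dirDeriv, Finset.sum_div, ← Finset.sum_neg_distrib]
  refine Finset.sum_congr rfl fun i _ => ?_
  ring

theorem localIP_eq_dirDeriv {n : ℕ} (p : MvPolynomial (Fin n) ℝ) (x u v : Fin n → ℝ) :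
    localIP p x u v = eval x (dirDeriv u p) * eval x (dirDeriv v p) / eval x p ^ 2
      - eval x (dirDeriv u (dirDeriv v p)) / eval x p := by
  rw [eval_dirDeriv, eval_dirDeriv, eval_dirDeriv_dirDeriv, Finset.sum_mul_sum, Finset.sum_div,
    Finset.sum_div, ← Finset.sum_sub_distrib]
  refine Finset.sum_congr rfl fun i _ => ?_
  rw [Finset.sum_div, Finset.sum_div, ← Finset.sum_sub_distrib]
  refine Finset.sum_congr rfl fun j _ => ?_
  simp only [hessNegLog, Matrix.of_apply]
  ring

theorem stmt3_general {n d : ℕ} (p : MvPolynomial (Fin n) ℝ) (e : Fin n → ℝ)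
    (hpe : 0 < MvPolynomial.eval e p)
    (L : Submodule ℝ (Fin n → ℝ)) (heL : e ∈ L)
    (M : L →ₗ[ℝ] (Fin d → ℝ))
    (hMe : M ⟨e, heL⟩ = fun _ => (1 : ℝ))
    (hMp : ∀ x : L, MvPolynomial.eval (x : Fin n → ℝ) p =
      MvPolynomial.eval e p * ∏ i, M x i) :
    ∀ u v : L,
      (∑ i, gradNegLog p e i * (v : Fin n → ℝ) i) = -∑ i, M v i ∧
      localIP p e (u : Fin n → ℝ) (v : Fin n → ℝ) = ∑ i, M u i * M v i := by
  have hfac := restrictLine_eq_of_eval_eq_prod heL hMe hMp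
  intro u v
  rw [sum_gradNegLog_mul, localIP_eq_dirDeriv, eval_dirDeriv_of_restrictLine_eq (hfac u),
    eval_dirDeriv_of_restrictLine_eq (hfac v), eval_dirDeriv_dirDeriv_of_eval_eq_prod heL hMe hMp]
  constructor
  · field_simp
  · field_simp
    ring

/-- Lemma 8.5 in RS14.
With `M : L → ℝᵈ` as in the factorization, for all `u, v ∈ L`:
`⟨g(e), v⟩ = -∑ᵢ (Mv)ᵢ` and `uᵀ H(e) v = (Mu)ᵀ (Mv)`, where `g(e)` and `H(e)` are the
gradient and Hessian of `f(x) = -ln p(x)` at `e`. -/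
theorem stmt3 {n d : ℕ} (hd : 1 ≤ d) (p : MvPolynomial (Fin n) ℝ) (e : Fin n → ℝ)
    (hp : IsHyperbolicPoly p e d) (hpe : 0 < MvPolynomial.eval e p)
    (L : Submodule ℝ (Fin n → ℝ)) (hL : Module.finrank ℝ L = 2) (heL : e ∈ L)
    (M : L →ₗ[ℝ] (Fin d → ℝ))
    (hMe : M ⟨e, heL⟩ = fun _ => (1 : ℝ))
    (hMp : ∀ x : L, MvPolynomial.eval (x : Fin n → ℝ) p =
      MvPolynomial.eval e p * ∏ i, M x i) :
    ∀ u v : L,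
      (∑ i, gradNegLog p e i * (v : Fin n → ℝ) i) = -∑ i, M v i ∧
      localIP p e (u : Fin n → ℝ) (v : Fin n → ℝ) = ∑ i, M u i * M v i :=
  stmt3_general p e hpe L heL M hMe hMp
end

section
/- Let E ∈ ℝ^{d×d} be a symmetric positive definite matrix and let 0 < α < √d. Then the dual cone of K_E(α) in the space of symmetric d×d matrices with the trace inner product satisfies K_E(α)* := {Y symmetric : tr(XY) ≥ 0 for all X ∈ K_E(α)} = K_{E⁻¹}(√(d−α²)). -/
/-!
Write `E = Bᵀ B`. The congruence `X ↦ B⁻ᵀ X B⁻¹` maps `K_E(α)` onto `K_I(α)`, the congruence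
`Y ↦ B Y Bᵀ` maps `K_{E⁻¹}(β)` onto `K_I(β)`, and the two are adjoint for the trace pairing, so it
suffices to treat `E = I`. Vectorizing, the trace pairing of symmetric matrices becomes the
Euclidean inner product and `K_I(α) = {x | α ‖x‖ ≤ ⟪x, e⟫}` with `e = vec I`, `‖e‖² = d`: a circular
cone around `e`. The dual of such a cone is again circular around `e`, with `α` replaced by the
`β` satisfying `α² + β² = ‖e‖²`, since the two half-angles `arccos (α / ‖e‖)` and
`arccos (β / ‖e‖)` add up to `π / 2`.
-/

/-- The matrix quadratic cone
`K_E(β) = {Z symmetric : tr(E⁻¹Z) ≥ β (tr((E⁻¹Z)²))^{1/2}}` for a positive definite `E`. -/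
noncomputable def matQuadCone {d : ℕ} (E : Matrix (Fin d) (Fin d) ℝ) (β : ℝ) :
    Set (Matrix (Fin d) (Fin d) ℝ) :=
  {Z | Z.IsSymm ∧ β * Real.sqrt ((E⁻¹ * Z * (E⁻¹ * Z)).trace) ≤ (E⁻¹ * Z).trace}

open Matrix
open scoped RealInnerProductSpace

section CircularCone

variable {V : Type*} [NormedAddCommGroup V] [InnerProductSpace ℝ V] {e x y : V} {α β : ℝ}

theorem norm_smul_sub_inner_smul_sq (x e : V) :
    ‖‖e‖ ^ 2 • x - ⟪x, e⟫ • e‖ ^ 2 = ‖e‖ ^ 2 * (‖e‖ ^ 2 * ‖x‖ ^ 2 - ⟪x, e⟫ ^ 2) := by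
  rw [norm_sub_sq_real, norm_smul, norm_smul, real_inner_smul_left, real_inner_smul_right,
    Real.norm_of_nonneg (by positivity), Real.norm_eq_abs, mul_pow, mul_pow, sq_abs]
  ring

theorem inner_nonneg_of_mul_norm_le_inner (hα : 0 < α) (hβ : 0 < β)
    (hαβ : α ^ 2 + β ^ 2 = ‖e‖ ^ 2) (hx : α * ‖x‖ ≤ ⟪x, e⟫) (hy : β * ‖y‖ ≤ ⟪y, e⟫) :
    0 ≤ ⟪x, y⟫ := by
  set p := ⟪x, e⟫
  set q := ⟪y, e⟫
  set s := ‖e‖ ^ 2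
  have hs : 0 < s := hαβ ▸ by positivity
  have hp : 0 ≤ p := le_trans (by positivity) hx
  have hq : 0 ≤ q := le_trans (by positivity) hy
  have hxp : α ^ 2 * ‖x‖ ^ 2 ≤ p ^ 2 := by
    rw [← mul_pow]; exact pow_le_pow_left₀ (by positivity) hx 2
  have hyq : β ^ 2 * ‖y‖ ^ 2 ≤ q ^ 2 := by
    rw [← mul_pow]; exact pow_le_pow_left₀ (by positivity) hy 2
  have hx' := norm_smul_sub_inner_smul_sq x e
  have hy' := norm_smul_sub_inner_smul_sq y e
  have hxy' : ⟪s • x - p • e, s • y - q • e⟫ = s * (s * ⟪x, y⟫ - p * q) := by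
    simp only [inner_sub_left, inner_sub_right, real_inner_smul_left, real_inner_smul_right,
      real_inner_self_eq_norm_sq, real_inner_comm y e]
    ring
  -- Cauchy–Schwarz for the components of `x` and `y` orthogonal to `e`
  have hCS := real_inner_mul_inner_self_le (s • x - p • e) (s • y - q • e)
  rw [hxy', real_inner_self_eq_norm_sq, real_inner_self_eq_norm_sq, hx', hy'] at hCS
  have hA : 0 ≤ s * ‖x‖ ^ 2 - p ^ 2 := nonneg_of_mul_nonneg_right (hx' ▸ sq_nonneg _) hs
  have hB : 0 ≤ s * ‖y‖ ^ 2 - q ^ 2 := nonneg_of_mul_nonneg_right (hy' ▸ sq_nonneg _) hs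
  have hAB : (s * ‖x‖ ^ 2 - p ^ 2) * (s * ‖y‖ ^ 2 - q ^ 2) ≤ (p * q) ^ 2 := by
    have hA' : α ^ 2 * (s * ‖x‖ ^ 2 - p ^ 2) ≤ β ^ 2 * p ^ 2 := by rw [← hαβ]; nlinarith
    have hB' : β ^ 2 * (s * ‖y‖ ^ 2 - q ^ 2) ≤ α ^ 2 * q ^ 2 := by rw [← hαβ]; nlinarith
    have := mul_le_mul hA' hB' (by positivity) (by positivity)
    have hαβ0 : 0 < α ^ 2 * β ^ 2 := by positivity
    nlinarith
  have hc : (s * ⟪x, y⟫ - p * q) ^ 2 ≤ (p * q) ^ 2 := by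
    refine le_trans ?_ hAB
    have hs2 : 0 < s * s := by positivity
    nlinarith
  have := (abs_le_of_sq_le_sq' hc (by positivity)).1
  exact nonneg_of_mul_nonneg_right (by linarith) hs

theorem mul_norm_le_inner_of_forall_mem_span_pair (hα : 0 < α) (hβ : 0 < β)
    (hαβ : α ^ 2 + β ^ 2 = ‖e‖ ^ 2)
    (hy : ∀ x ∈ Submodule.span ℝ {y, e}, α * ‖x‖ ≤ ⟪x, e⟫ → 0 ≤ ⟪x, y⟫) :
    β * ‖y‖ ≤ ⟪y, e⟫ := by
  have hy_mem : y ∈ Submodule.span ℝ {y, e} := Submodule.subset_span (by simp)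
  have he_mem : e ∈ Submodule.span ℝ {y, e} := Submodule.subset_span (by simp)
  set t := ⟪y, e⟫
  set r := ‖e‖
  have hr : 0 < r := by
    have : 0 < r ^ 2 := hαβ ▸ by positivity
    exact lt_of_le_of_ne (norm_nonneg e) fun h => by simp [← h] at this
  have ht : 0 ≤ t := by
    have hαr : α ≤ r := abs_le_of_sq_le_sq' (by nlinarith) hr.le |>.2
    have := hy e he_mem (by rw [real_inner_self_eq_norm_sq]; nlinarith)
    rwa [real_inner_comm] at this
  set w := r ^ 2 • y - t • e
  have hw : ‖w‖ ^ 2 = r ^ 2 * (r ^ 2 * ‖y‖ ^ 2 - t ^ 2) := norm_smul_sub_inner_smul_sq y e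
  have hwe : ⟪w, e⟫ = 0 := by
    simp only [w, inner_sub_left, real_inner_smul_left, real_inner_self_eq_norm_sq]
    ring
  have hwy : ‖w‖ ^ 2 = r ^ 2 * ⟪w, y⟫ := by
    calc ‖w‖ ^ 2 = ⟪w, r ^ 2 • y - t • e⟫ := (real_inner_self_eq_norm_sq w).symm
      _ = r ^ 2 * ⟪w, y⟫ := by
        rw [inner_sub_right, real_inner_smul_right, real_inner_smul_right, hwe]; ring
  -- a boundary point of the primal cone in the plane of `y` and `e`, on the far side of `y`
  set x := (α * ‖w‖) • e - (β * r) • w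
  have hx : ‖x‖ = r ^ 2 * ‖w‖ := by
    have : ‖x‖ ^ 2 = (r ^ 2 * ‖w‖) ^ 2 := by
      rw [norm_sub_sq_real, real_inner_smul_left, real_inner_smul_right, real_inner_comm, hwe,
        norm_smul, norm_smul, Real.norm_eq_abs, Real.norm_eq_abs, abs_of_nonneg (by positivity),
        abs_of_nonneg (by positivity)]
      linear_combination ‖w‖ ^ 2 * r ^ 2 * hαβ
    exact (sq_eq_sq₀ (norm_nonneg _) (by positivity)).1 this
  have hxe : ⟪x, e⟫ = α * ‖x‖ := by
    rw [hx, inner_sub_left, real_inner_smul_left, real_inner_smul_left, hwe,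
      real_inner_self_eq_norm_sq]
    ring
  have hx_mem : x ∈ Submodule.span ℝ {y, e} :=
    sub_mem (Submodule.smul_mem _ _ he_mem)
      (Submodule.smul_mem _ _ (sub_mem (Submodule.smul_mem _ _ hy_mem)
        (Submodule.smul_mem _ _ he_mem)))
  have hxy : 0 ≤ r * ‖w‖ * (α * r * t - β * ‖w‖) := by
    have := hy x hx_mem hxe.ge
    rw [inner_sub_left, real_inner_smul_left, real_inner_smul_left, real_inner_comm y e] at this
    have hexpand : r * ‖w‖ * (α * r * t - β * ‖w‖)
        = r ^ 2 * (α * ‖w‖ * t - β * r * ⟪w, y⟫) := by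
      linear_combination (-β * r) * hwy
    rw [hexpand]
    exact mul_nonneg (by positivity) this
  have hkey : β * ‖w‖ ≤ α * r * t := by
    rcases (norm_nonneg w).eq_or_lt with h0 | hpos
    · rw [← h0, mul_zero]; positivity
    · linarith [nonneg_of_mul_nonneg_right hxy (by positivity)]
  have hsq : (β * ‖y‖) ^ 2 ≤ t ^ 2 := by
    have h1 : β ^ 2 * ‖w‖ ^ 2 ≤ (α * r * t) ^ 2 := by
      rw [← mul_pow]; exact pow_le_pow_left₀ (by positivity) hkey 2
    rw [hw] at h1
    have h2 : r ^ 2 * (r ^ 2 * (β * ‖y‖) ^ 2) ≤ r ^ 2 * (r ^ 2 * t ^ 2) := by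
      linear_combination h1 + r ^ 2 * t ^ 2 * hαβ
    exact le_of_mul_le_mul_left (le_of_mul_le_mul_left h2 (by positivity)) (by positivity)
  exact abs_le_of_sq_le_sq' hsq ht |>.2

end CircularCone

def symmDualCone {n : Type*} [Fintype n] (K : Set (Matrix n n ℝ)) : Set (Matrix n n ℝ) :=
  {Y | Y.IsSymm ∧ ∀ X ∈ K, 0 ≤ (X * Y).trace}

section Vectorization

variable {m n : Type*} [Fintype m] [Fintype n]

theorem Matrix.inner_toLp_vec (X Y : Matrix m n ℝ) :
    ⟪WithLp.toLp 2 X.vec, WithLp.toLp 2 Y.vec⟫ = (Xᵀ * Y).trace := by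
  rw [EuclideanSpace.inner_toLp_toLp, star_trivial, dotProduct_comm, vec_dotProduct_vec]

theorem Matrix.IsSymm.inner_toLp_vec {X : Matrix n n ℝ} (hX : X.IsSymm) (Y : Matrix n n ℝ) :
    ⟪WithLp.toLp 2 X.vec, WithLp.toLp 2 Y.vec⟫ = (X * Y).trace := by
  rw [Matrix.inner_toLp_vec, hX.eq]

theorem Matrix.IsSymm.norm_toLp_vec {X : Matrix n n ℝ} (hX : X.IsSymm) :
    ‖WithLp.toLp 2 X.vec‖ = √((X * X).trace) := by
  rw [norm_eq_sqrt_real_inner, hX.inner_toLp_vec]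

theorem Matrix.norm_toLp_vec_one_sq [DecidableEq n] :
    ‖WithLp.toLp 2 (1 : Matrix n n ℝ).vec‖ ^ 2 = Fintype.card n := by
  rw [← real_inner_self_eq_norm_sq, isSymm_one.inner_toLp_vec, Matrix.one_mul, trace_one]

end Vectorization

section IdentityCone

variable {d : ℕ} {α β : ℝ}

theorem mem_matQuadCone_one_iff {X : Matrix (Fin d) (Fin d) ℝ} :
    X ∈ matQuadCone 1 β ↔
      X.IsSymm ∧ β * ‖WithLp.toLp 2 X.vec‖ ≤
        ⟪WithLp.toLp 2 X.vec, WithLp.toLp 2 (1 : Matrix (Fin d) (Fin d) ℝ).vec⟫ := by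
  simp only [matQuadCone, Set.mem_ofPred_eq, inv_one, Matrix.one_mul]
  exact and_congr_right fun hX => by rw [hX.norm_toLp_vec, hX.inner_toLp_vec, Matrix.mul_one]

theorem symmDualCone_matQuadCone_one (hα : 0 < α) (hβ : 0 < β) (hαβ : α ^ 2 + β ^ 2 = d) :
    symmDualCone (matQuadCone (1 : Matrix (Fin d) (Fin d) ℝ) α) = matQuadCone 1 β := by
  have hαβ' : α ^ 2 + β ^ 2 = ‖WithLp.toLp 2 (1 : Matrix (Fin d) (Fin d) ℝ).vec‖ ^ 2 := by
    rw [norm_toLp_vec_one_sq, Fintype.card_fin, hαβ]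
  ext Y
  rw [mem_matQuadCone_one_iff]
  constructor
  · rintro ⟨hY, hdual⟩
    refine ⟨hY, mul_norm_le_inner_of_forall_mem_span_pair hα hβ hαβ' fun x hx hxα => ?_⟩
    obtain ⟨a, b, rfl⟩ := Submodule.mem_span_pair.1 hx
    have hX : (a • Y + b • 1 : Matrix (Fin d) (Fin d) ℝ).IsSymm :=
      (hY.smul a).add (isSymm_one.smul b)
    change 0 ≤ ⟪WithLp.toLp 2 (a • Y + b • 1).vec, WithLp.toLp 2 Y.vec⟫
    rw [hX.inner_toLp_vec]
    exact hdual _ (mem_matQuadCone_one_iff.2 ⟨hX, hxα⟩)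
  · rintro ⟨hY, hYβ⟩
    refine ⟨hY, fun X hXmem => ?_⟩
    obtain ⟨hX, hXα⟩ := mem_matQuadCone_one_iff.1 hXmem
    rw [← hX.inner_toLp_vec]
    exact inner_nonneg_of_mul_norm_le_inner hα hβ hαβ' hXα hYβ

end IdentityCone

section Congruence

variable {n : Type*} [Fintype n] [DecidableEq n] {P : Matrix n n ℝ}

theorem Matrix.isSymm_mul_mul_transpose_iff (hP : IsUnit P.det) {X : Matrix n n ℝ} :
    (P * X * Pᵀ).IsSymm ↔ X.IsSymm := by
  have hPt : IsUnit Pᵀ.det := (det_transpose P).symm ▸ hP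
  refine ⟨fun h => ?_, fun h => ?_⟩
  · rw [IsSymm]
    have h' : P * Xᵀ * Pᵀ = P * X * Pᵀ := by
      simpa [IsSymm, transpose_mul, Matrix.mul_assoc] using h
    have := congrArg (fun Z => P⁻¹ * Z * Pᵀ⁻¹) h'
    simpa [Matrix.mul_assoc, nonsing_inv_mul_cancel_left _ _ hP,
      mul_nonsing_inv _ hPt] using this
  · simp [IsSymm, transpose_mul, h.eq, Matrix.mul_assoc]

theorem Matrix.mul_mul_transpose_surjective (hP : IsUnit P.det) :
    Function.Surjective (P * · * Pᵀ) := by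
  have hPt : IsUnit Pᵀ.det := (det_transpose P).symm ▸ hP
  refine fun Z => ⟨P⁻¹ * Z * Pᵀ⁻¹, ?_⟩
  simp [Matrix.mul_assoc, mul_nonsing_inv_cancel_left _ _ hP, nonsing_inv_mul _ hPt]

theorem Matrix.trace_inv_mul_mul (hP : IsUnit P.det) (A : Matrix n n ℝ) :
    (P⁻¹ * A * P).trace = A.trace := by
  rw [trace_mul_cycle, mul_nonsing_inv _ hP, Matrix.one_mul]

theorem symmDualCone_image_mul_mul_transpose (hP : IsUnit P.det) (K : Set (Matrix n n ℝ)) :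
    symmDualCone ((P * · * Pᵀ) '' K) = (Pᵀ * · * P) ⁻¹' symmDualCone K := by
  have hPt : IsUnit Pᵀ.det := (det_transpose P).symm ▸ hP
  ext Y
  simp only [symmDualCone, Set.mem_ofPred_eq, Set.mem_preimage, Set.forall_mem_image]
  rw [← isSymm_mul_mul_transpose_iff hPt, transpose_transpose]
  refine and_congr_right fun _ => forall₂_congr fun X _ => ?_
  simp only [Matrix.mul_assoc]
  rw [trace_mul_comm P]
  simp only [Matrix.mul_assoc]

end Congruence

section QuadCone

variable {d : ℕ} {P : Matrix (Fin d) (Fin d) ℝ}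

theorem preimage_mul_mul_transpose_matQuadCone (hP : IsUnit P.det)
    (E : Matrix (Fin d) (Fin d) ℝ) (β : ℝ) :
    (P * · * Pᵀ) ⁻¹' matQuadCone (P * E * Pᵀ) β = matQuadCone E β := by
  have hPt : IsUnit Pᵀ.det := (det_transpose P).symm ▸ hP
  have hconj (X : Matrix (Fin d) (Fin d) ℝ) :
      (P * E * Pᵀ)⁻¹ * (P * X * Pᵀ) = Pᵀ⁻¹ * (E⁻¹ * X) * Pᵀ := by
    simp only [Matrix.mul_inv_rev, Matrix.mul_assoc, nonsing_inv_mul_cancel_left _ _ hP]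
  ext X
  simp only [matQuadCone, Set.mem_preimage, Set.mem_ofPred_eq, hconj,
    isSymm_mul_mul_transpose_iff hP]
  rw [show Pᵀ⁻¹ * (E⁻¹ * X) * Pᵀ * (Pᵀ⁻¹ * (E⁻¹ * X) * Pᵀ) = Pᵀ⁻¹ * (E⁻¹ * X * (E⁻¹ * X)) * Pᵀ
    by simp only [Matrix.mul_assoc, mul_nonsing_inv_cancel_left _ _ hPt],
    trace_inv_mul_mul hPt, trace_inv_mul_mul hPt]

theorem image_mul_mul_transpose_matQuadCone (hP : IsUnit P.det)
    (E : Matrix (Fin d) (Fin d) ℝ) (β : ℝ) :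
    (P * · * Pᵀ) '' matQuadCone E β = matQuadCone (P * E * Pᵀ) β := by
  rw [← preimage_mul_mul_transpose_matQuadCone hP,
    Set.image_preimage_eq _ (mul_mul_transpose_surjective hP)]

end QuadCone

theorem stmt11_general {d : ℕ} (E : Matrix (Fin d) (Fin d) ℝ)
    (hE : E.PosDef)
    (α : ℝ) (hα : 0 < α) (hα' : α < Real.sqrt d) :
    {Y : Matrix (Fin d) (Fin d) ℝ | Y.IsSymm ∧ ∀ X ∈ matQuadCone E α, 0 ≤ (X * Y).trace} =
      matQuadCone E⁻¹ (Real.sqrt ((d : ℝ) - α ^ 2)) := by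
  obtain ⟨B, rfl⟩ : ∃ B : Matrix (Fin d) (Fin d) ℝ, E = Bᵀ * B := by
    open scoped MatrixOrder in
    obtain ⟨B, hB⟩ := CStarAlgebra.nonneg_iff_eq_star_mul_self.mp hE.posSemidef.nonneg
    exact ⟨B, hB⟩
  have hB : IsUnit B.det := by
    refine isUnit_iff_ne_zero.2 fun h => hE.det_pos.ne' ?_
    rw [det_mul, h, mul_zero]
  have hαd : α ^ 2 < d := (Real.lt_sqrt hα.le).1 hα'
  have hβ : 0 < √(d - α ^ 2) := Real.sqrt_pos.2 (sub_pos.2 hαd)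
  have hαβ : α ^ 2 + √(d - α ^ 2) ^ 2 = d := by rw [Real.sq_sqrt (sub_pos.2 hαd).le]; ring
  have hBt : IsUnit Bᵀ.det := (det_transpose B).symm ▸ hB
  have hB_inv_B : B * (Bᵀ * B)⁻¹ * Bᵀ = 1 := by
    rw [Matrix.mul_inv_rev, ← Matrix.mul_assoc, mul_nonsing_inv _ hB, Matrix.one_mul,
      nonsing_inv_mul _ hBt]
  calc symmDualCone (matQuadCone (Bᵀ * B) α)
      = symmDualCone ((Bᵀ * · * Bᵀᵀ) '' matQuadCone 1 α) := by
        rw [image_mul_mul_transpose_matQuadCone hBt, Matrix.mul_one, transpose_transpose]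
    _ = (B * · * Bᵀ) ⁻¹' matQuadCone 1 (√(d - α ^ 2)) := by
        rw [symmDualCone_image_mul_mul_transpose hBt, transpose_transpose,
          symmDualCone_matQuadCone_one hα hβ hαβ]
    _ = matQuadCone (Bᵀ * B)⁻¹ (√(d - α ^ 2)) := by
        rw [← hB_inv_B, preimage_mul_mul_transpose_matQuadCone hB]

/-- Lemma 3.1 in RS14.
For a symmetric positive definite `E` and `0 < α < √d`, the dual cone of `K_E(α)` in the
space of symmetric matrices with the trace inner product is `K_{E⁻¹}(√(d-α²))`. -/
theorem stmt11 {d : ℕ} (hd : 1 ≤ d) (E : Matrix (Fin d) (Fin d) ℝ)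
    (hEs : E.IsSymm) (hE : E.PosDef)
    (α : ℝ) (hα : 0 < α) (hα' : α < Real.sqrt d) :
    {Y : Matrix (Fin d) (Fin d) ℝ | Y.IsSymm ∧ ∀ X ∈ matQuadCone E α, 0 ≤ (X * Y).trace} =
      matQuadCone E⁻¹ (Real.sqrt ((d : ℝ) - α ^ 2)) :=
  stmt11_general E hE α hα hα'
end

section
/- Fix 0 < α < 1 and a nonzero symmetric matrix X ∈ ℝ^{d×d} (d ≥ 2) with tr X = α·(tr(X²))^{1/2}; set S = (1/(d−α²))·(I − (α²/tr X)·X), q(t) = tr(((I+tX)S)²), and E(t) = (1/(1+t))·(I+tX). Then: (i) q is a strictly convex quadratic polynomial with q(0) = 1/(d−α²) and q'(0) < 0; and (ii) for every t > −1 and every 0 < β < 1: [E(t) is positive definite and tr(SZ) > 0 for every nonzero Z ∈ K_{E(t)}(β)] if and only if q(t) < 1/(d−β²). -/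
/-!
Diagonalise `X = U diag(μ) Uᵀ`. Then `S`, `E(t)` and `(I + tX)S` are diagonal in the same basis:
`S = U diag(s) Uᵀ` with `s = (1 - (α² / Σμ) μ) / (d - α²)`, and `tr X = α ‖X‖_F` becomes
`Σμ = α ‖μ‖`, which gives `Σ s = 1`, `s ⬝ μ = 0` and `s > 0`. Hence `q(t) = ‖(1 + tμ) s‖²` is a
quadratic in `t` with leading coefficient `‖s μ‖² > 0`, value `‖s‖² = 1/(d - α²)` at `0`, and slope
`2 Σ s² μ = -2 k c Σ s μ² < 0` (where `s = k (1 - c μ)`).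

For `(ii)`, conjugating by `U` and keeping only the diagonal of `Z` (off-diagonal entries only
enlarge `tr((E⁻¹Z)²)`) reduces the dual-cone condition at `E(t) = U diag(ε) Uᵀ` to the statement
that `s ε` lies in the interior of the dual of the circular cone `{w : β ‖w‖ ≤ Σ w}` around the
all-ones vector. That interior is `{v : 0 < Σ v, (d - β²) ‖v‖² < (Σ v)²}`, and all its vectors are
entrywise positive, which yields `ε > 0`, i.e. `E(t) ≻ 0`, for free. Finally
`s ε = (1 + t)⁻¹ (1 + tμ) s` with `Σ (1 + tμ) s = 1`, so the condition reads `(d - β²) q(t) < 1`.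
-/

open scoped BigOperators

open Matrix Finset

section VectorCone

/-- The vector analogue of `matQuadCone`: a circular cone around the all-ones vector. -/
def vecQuadCone (ι : Type*) [Fintype ι] (β : ℝ) : Set (ι → ℝ) :=
  {w | β * √(w ⬝ᵥ w) ≤ ∑ i, w i}

variable {ι : Type*} [Fintype ι]

lemma dotProduct_self_pos {v : ι → ℝ} (hv : v ≠ 0) : 0 < v ⬝ᵥ v :=
  (sum_nonneg fun i _ => mul_self_nonneg (v i)).lt_of_ne' (dotProduct_self_eq_zero.not.mpr hv)

lemma sum_centered_mul_centered (v w : ι → ℝ) :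
    ∑ i, (Fintype.card ι * v i - ∑ j, v j) * (Fintype.card ι * w i - ∑ j, w j) =
      Fintype.card ι * (Fintype.card ι * (v ⬝ᵥ w) - (∑ i, v i) * ∑ i, w i) := by
  set n : ℝ := (Fintype.card ι : ℝ)
  have h : ∀ i, (n * v i - ∑ j, v j) * (n * w i - ∑ j, w j) =
      n ^ 2 * (v i * w i) - (n * ∑ j, w j) * v i - (n * ∑ j, v j) * w i +
        (∑ j, v j) * ∑ j, w j := fun i => by ring
  simp only [h, sum_add_distrib, sum_sub_distrib, ← mul_sum, sum_const, card_univ, nsmul_eq_mul,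
    dotProduct]
  ring

lemma sq_sum_le_card_mul_dotProduct_self (v : ι → ℝ) :
    (∑ i, v i) ^ 2 ≤ Fintype.card ι * (v ⬝ᵥ v) := by
  simpa [dotProduct, sq] using sq_sum_le_card_mul_sum_sq (s := univ) (f := v)

lemma sq_card_mul_dotProduct_sub_le (v w : ι → ℝ) :
    (Fintype.card ι * (v ⬝ᵥ w) - (∑ i, v i) * ∑ i, w i) ^ 2 ≤
      (Fintype.card ι * (v ⬝ᵥ v) - (∑ i, v i) ^ 2) *
        (Fintype.card ι * (w ⬝ᵥ w) - (∑ i, w i) ^ 2) := by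
  rcases isEmpty_or_nonempty ι with _ | _
  · simp
  have hn : (0 : ℝ) < Fintype.card ι := by exact_mod_cast Fintype.card_pos
  have := sum_mul_sq_le_sq_mul_sq univ (fun i => Fintype.card ι * v i - ∑ j, v j)
    (fun i => Fintype.card ι * w i - ∑ j, w j)
  simp only [sq, sum_centered_mul_centered] at this ⊢
  refine le_of_mul_le_mul_left ?_ (by positivity : (0 : ℝ) < Fintype.card ι * Fintype.card ι)
  linear_combination this

lemma dotProduct_pos_of_mem_vecQuadCone {β : ℝ} (hβ0 : 0 < β)
    (hβn : β ^ 2 < Fintype.card ι) {v w : ι → ℝ} (hv₀ : 0 < ∑ i, v i)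
    (hv : (Fintype.card ι - β ^ 2) * (v ⬝ᵥ v) < (∑ i, v i) ^ 2)
    (hw : w ∈ vecQuadCone ι β) (hw₀ : w ≠ 0) : 0 < v ⬝ᵥ w := by
  have hQ : 0 < w ⬝ᵥ w := dotProduct_self_pos hw₀
  have hW : 0 < ∑ i, w i := (by positivity : 0 < β * √(w ⬝ᵥ w)).trans_le hw
  have hW2 : β ^ 2 * (w ⬝ᵥ w) ≤ (∑ i, w i) ^ 2 := by
    simpa [mul_pow, Real.sq_sqrt hQ.le] using pow_le_pow_left₀ (by positivity) hw.out 2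
  have hP := sq_sum_le_card_mul_dotProduct_self v
  have hCS := sq_card_mul_dotProduct_sub_le v w
  set n : ℝ := (Fintype.card ι : ℝ)
  set T := ∑ i, v i
  set W := ∑ i, w i
  -- With `P, Q, R = v ⬝ᵥ v, w ⬝ᵥ w, v ⬝ᵥ w`: centred Cauchy–Schwarz bounds `(nR - TW)²` by
  -- `(nP - T²)(nQ - W²)`, which the two cone conditions push below `(TW)²`; so `R ≤ 0` fails.
  by_contra! hR
  have h1 : (n - β ^ 2) * (n * (v ⬝ᵥ v) - T ^ 2) < β ^ 2 * T ^ 2 := by nlinarith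
  have h2 : β ^ 2 * (n * (w ⬝ᵥ w) - W ^ 2) ≤ (n - β ^ 2) * W ^ 2 := by nlinarith
  have h3 : (n * (v ⬝ᵥ v) - T ^ 2) * (n * (w ⬝ᵥ w) - W ^ 2) < T ^ 2 * W ^ 2 := by
    have hb : 0 < (n - β ^ 2) * β ^ 2 := mul_pos (by linarith) (by positivity)
    refine lt_of_mul_lt_mul_left ?_ hb.le
    calc (n - β ^ 2) * β ^ 2 * ((n * (v ⬝ᵥ v) - T ^ 2) * (n * (w ⬝ᵥ w) - W ^ 2))
        ≤ (n - β ^ 2) * (n * (v ⬝ᵥ v) - T ^ 2) * ((n - β ^ 2) * W ^ 2) := by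
          nlinarith [mul_le_mul_of_nonneg_left h2
            (by nlinarith : 0 ≤ (n - β ^ 2) * (n * (v ⬝ᵥ v) - T ^ 2))]
      _ < β ^ 2 * T ^ 2 * ((n - β ^ 2) * W ^ 2) := by gcongr
      _ = (n - β ^ 2) * β ^ 2 * (T ^ 2 * W ^ 2) := by ring
  have h4 : (T * W) ^ 2 ≤ (n * (v ⬝ᵥ w) - T * W) ^ 2 := by
    have : n * (v ⬝ᵥ w) ≤ 0 := mul_nonpos_of_nonneg_of_nonpos (by positivity) hR
    nlinarith [mul_pos hv₀ hW]
  rw [mul_pow] at h4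
  linarith

lemma exists_mem_vecQuadCone_dotProduct_nonpos {β : ℝ} (hβ0 : 0 < β) {v : ι → ℝ}
    (hv₀ : 0 < ∑ i, v i) (hv : (∑ i, v i) ^ 2 ≤ (Fintype.card ι - β ^ 2) * (v ⬝ᵥ v)) :
    ∃ w ∈ vecQuadCone ι β, w ≠ 0 ∧ v ⬝ᵥ w ≤ 0 := by
  set n : ℝ := (Fintype.card ι : ℝ)
  set T := ∑ i, v i
  set P := v ⬝ᵥ v
  have hP : 0 < P := by
    refine (sum_nonneg fun i _ => mul_self_nonneg (v i)).lt_of_ne' fun h => ?_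
    rw [show P = 0 from h, mul_zero] at hv
    nlinarith
  have hgap : β ^ 2 * P ≤ n * P - T ^ 2 := by linarith
  -- `w = P·1 - T·v` is orthogonal to `v`, and lies in the cone exactly when `T² ≤ (n - β²) P`.
  set w : ι → ℝ := P • 1 - T • v
  have hsum : ∑ i, w i = n * P - T ^ 2 := by
    rw [← one_dotProduct]
    simp only [w, dotProduct_sub, dotProduct_smul, one_dotProduct_one, smul_eq_mul]
    simp only [one_dotProduct, n, T, P]
    ring
  have hsq : w ⬝ᵥ w = P * (n * P - T ^ 2) := by
    simp only [w, dotProduct_sub, sub_dotProduct, dotProduct_smul, smul_dotProduct,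
      one_dotProduct_one, smul_eq_mul]
    simp only [one_dotProduct, dotProduct_one, T, n, P]
    ring
  refine ⟨w, ?_, fun h => ?_, ?_⟩
  · show β * √_ ≤ _
    rw [hsq, hsum, ← Real.sqrt_sq hβ0.le, ← Real.sqrt_mul (sq_nonneg _)]
    have hG : 0 ≤ n * P - T ^ 2 := hgap.trans' (by positivity)
    exact Real.sqrt_le_iff.mpr ⟨hG, by nlinarith [mul_le_mul_of_nonneg_right hgap hG]⟩
  · rw [h] at hsum
    simp only [Pi.zero_apply, sum_const_zero] at hsum
    nlinarith [mul_pos (pow_pos hβ0 2) hP]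
  · simp only [w, dotProduct_sub, dotProduct_smul, dotProduct_one, smul_eq_mul]
    exact (sub_eq_zero.mpr (mul_comm _ _)).le

theorem forall_vecQuadCone_dotProduct_pos_iff {β : ℝ} (hβ0 : 0 < β)
    (hβn : β ^ 2 < Fintype.card ι) (v : ι → ℝ) :
    (∀ w ∈ vecQuadCone ι β, w ≠ 0 → 0 < v ⬝ᵥ w) ↔
      0 < ∑ i, v i ∧ (Fintype.card ι - β ^ 2) * (v ⬝ᵥ v) < (∑ i, v i) ^ 2 := by
  refine ⟨fun h => ?_, fun ⟨hv₀, hv⟩ w hw hw₀ =>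
    dotProduct_pos_of_mem_vecQuadCone hβ0 hβn hv₀ hv hw hw₀⟩
  have hn : (0 : ℝ) < Fintype.card ι := (pow_pos hβ0 2).trans hβn
  have : Nonempty ι := Fintype.card_pos_iff.mp (by exact_mod_cast hn)
  have hv₀ : 0 < ∑ i, v i := by
    refine dotProduct_one v ▸ h 1 ?_ one_ne_zero
    show β * √_ ≤ _
    rw [one_dotProduct_one, ← one_dotProduct, one_dotProduct_one]
    calc β * √(Fintype.card ι) ≤ √(Fintype.card ι) * √(Fintype.card ι) := by
          gcongr; exact Real.le_sqrt_of_sq_le hβn.le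
      _ = Fintype.card ι := Real.mul_self_sqrt hn.le
  refine ⟨hv₀, lt_of_not_ge fun hv => ?_⟩
  obtain ⟨w, hw, hw₀, hvw⟩ := exists_mem_vecQuadCone_dotProduct_nonpos hβ0 hv₀ hv
  exact (h w hw hw₀).not_ge hvw

lemma pos_of_forall_vecQuadCone_dotProduct_pos [DecidableEq ι] {β : ℝ} (hβ1 : β ≤ 1)
    {v : ι → ℝ} (h : ∀ w ∈ vecQuadCone ι β, w ≠ 0 → 0 < v ⬝ᵥ w) (j : ι) : 0 < v j := by
  refine dotProduct_single_one v j ▸ h _ ?_ (Pi.single_ne_zero_iff.mpr one_ne_zero)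
  show β * √_ ≤ _
  simp [hβ1]

end VectorCone

section WeightedFrobenius

variable {n : Type*} [Fintype n]

def weightedFrobSq (η : n → ℝ) (Z : Matrix n n ℝ) : ℝ :=
  ∑ i, ∑ j, η i * η j * Z i j ^ 2

lemma weightedFrobSq_nonneg {η : n → ℝ} (hη : ∀ i, 0 ≤ η i) (Z : Matrix n n ℝ) :
    0 ≤ weightedFrobSq η Z :=
  sum_nonneg fun i _ => sum_nonneg fun j _ => by have := hη i; have := hη j; positivity

lemma sum_diag_sq_le_weightedFrobSq {η : n → ℝ} (hη : ∀ i, 0 ≤ η i) (Z : Matrix n n ℝ) :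
    ∑ i, (η i * Z i i) ^ 2 ≤ weightedFrobSq η Z := by
  refine sum_le_sum fun i _ => ?_
  calc (η i * Z i i) ^ 2 = η i * η i * Z i i ^ 2 := by ring
    _ ≤ ∑ j, η i * η j * Z i j ^ 2 :=
      single_le_sum (f := fun j => η i * η j * Z i j ^ 2)
        (fun j _ => by have := hη i; have := hη j; positivity) (mem_univ i)

lemma eq_zero_of_weightedFrobSq_eq_zero {η : n → ℝ} (hη : ∀ i, 0 < η i) {Z : Matrix n n ℝ}
    (h : weightedFrobSq η Z = 0) : Z = 0 := by
  have hterm : ∀ i j, 0 ≤ η i * η j * Z i j ^ 2 := fun i j => by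
    have := hη i; have := hη j; positivity
  ext i j
  have hrow := (Fintype.sum_eq_zero_iff_of_nonneg fun i => sum_nonneg fun j _ => hterm i j).mp h
  have hij := congrFun ((Fintype.sum_eq_zero_iff_of_nonneg (hterm i)).mp (congrFun hrow i)) j
  simpa [(hη i).ne', (hη j).ne'] using hij

variable [DecidableEq n]

lemma inv_diagonal_of_ne_zero {ε : n → ℝ} (hε : ∀ i, ε i ≠ 0) :
    (diagonal ε)⁻¹ = diagonal ε⁻¹ :=
  inv_eq_left_inv <| by simp [diagonal_mul_diagonal, inv_mul_cancel₀ (hε _)]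

lemma trace_diagonal_mul (η : n → ℝ) (Z : Matrix n n ℝ) :
    (diagonal η * Z).trace = ∑ i, η i * Z i i := by
  simp [trace, diagonal_mul]

lemma trace_diagonal_mul_sq (η : n → ℝ) {Z : Matrix n n ℝ} (hZ : Z.IsSymm) :
    (diagonal η * Z * (diagonal η * Z)).trace = weightedFrobSq η Z := by
  refine sum_congr rfl fun i _ => ?_
  rw [Matrix.diag, mul_apply]
  refine sum_congr rfl fun j _ => ?_
  simp only [diagonal_mul]
  rw [hZ.apply i j]
  ring

end WeightedFrobenius

section MatrixCone

variable {d : ℕ}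

theorem forall_matQuadCone_diagonal_iff {β : ℝ} (hβ : 0 < β) {ε : Fin d → ℝ}
    (hε : ∀ i, 0 < ε i) (s : Fin d → ℝ) :
    (∀ Z ∈ matQuadCone (diagonal ε) β, Z ≠ 0 → 0 < (diagonal s * Z).trace) ↔
      ∀ w ∈ vecQuadCone (Fin d) β, w ≠ 0 → 0 < (s * ε) ⬝ᵥ w := by
  have hη : ∀ i, 0 < ε⁻¹ i := fun i => inv_pos.mpr (hε i)
  simp only [matQuadCone, inv_diagonal_of_ne_zero fun i => (hε i).ne', Set.mem_ofPred_eq]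
  constructor
  · intro h w hw hw₀
    have hεw : diagonal ε⁻¹ * diagonal (ε * w) = diagonal w := by
      rw [diagonal_mul_diagonal]
      congr with i
      simp [inv_mul_cancel_left₀ (hε i).ne']
    have := h (diagonal (ε * w)) ⟨isSymm_diagonal _, ?_⟩ ?_
    · simpa [trace_diagonal_mul, dotProduct, mul_assoc] using this
    · rw [hεw, diagonal_mul_diagonal, trace_diagonal, trace_diagonal]
      exact hw
    · intro h0
      refine hw₀ (funext fun i => ?_)
      simpa [(hε i).ne'] using congrFun (congrFun h0 i) i
  · -- Off-diagonal entries of `Z` only enlarge `tr((E⁻¹Z)²)`, so the diagonal of `E⁻¹Z` is in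
    -- the vector cone.
    rintro h Z ⟨hZs, hZ⟩ hZ₀
    rw [trace_diagonal_mul_sq _ hZs, trace_diagonal_mul] at hZ
    set w : Fin d → ℝ := fun i => ε⁻¹ i * Z i i
    have hw : w ∈ vecQuadCone (Fin d) β := by
      have hdiag : w ⬝ᵥ w ≤ weightedFrobSq ε⁻¹ Z := by
        simpa only [dotProduct, sq] using sum_diag_sq_le_weightedFrobSq (fun i => (hη i).le) Z
      exact le_trans (by gcongr) hZ
    have hw₀ : w ≠ 0 := fun hw₀ => hZ₀ <| eq_zero_of_weightedFrobSq_eq_zero hη <| by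
      simp only [hw₀, Pi.zero_apply, sum_const_zero] at hZ
      exact le_antisymm
        (Real.sqrt_eq_zero'.mp (by nlinarith [Real.sqrt_nonneg (weightedFrobSq ε⁻¹ Z)]))
        (weightedFrobSq_nonneg (fun i => (hη i).le) Z)
    convert h w hw hw₀ using 1
    rw [trace_diagonal_mul]
    refine sum_congr rfl fun i _ => ?_
    simp [w, mul_assoc, mul_inv_cancel_left₀ (hε i).ne']

section Conjugation

variable (U : unitaryGroup (Fin d) ℝ)

local notation "φ" => Unitary.conjStarAlgAut ℝ (Matrix (Fin d) (Fin d) ℝ) U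

lemma trace_conjStarAlgAut (M : Matrix (Fin d) (Fin d) ℝ) : (φ M).trace = M.trace := by
  rw [Unitary.conjStarAlgAut_apply, trace_mul_cycle, Unitary.coe_star_mul_self, one_mul]

lemma inv_conjStarAlgAut (M : Matrix (Fin d) (Fin d) ℝ) : (φ M)⁻¹ = φ M⁻¹ := by
  rw [Unitary.conjStarAlgAut_apply, Unitary.conjStarAlgAut_apply, Matrix.mul_inv_rev,
    Matrix.mul_inv_rev, inv_eq_left_inv (Unitary.coe_star_mul_self U),
    inv_eq_left_inv (Unitary.mul_star_self_of_mem U.2), mul_assoc]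

lemma isSymm_conjStarAlgAut_iff {Z : Matrix (Fin d) (Fin d) ℝ} : (φ Z).IsSymm ↔ Z.IsSymm := by
  simp only [← isHermitian_iff_isSymm, isHermitian_iff_isSelfAdjoint]
  exact ⟨fun h => by simpa only [StarAlgEquiv.symm_apply_apply] using h.map (φ).symm,
    fun h => h.map _⟩

lemma conjStarAlgAut_mem_matQuadCone_iff {E Z : Matrix (Fin d) (Fin d) ℝ} {β : ℝ} :
    φ Z ∈ matQuadCone (φ E) β ↔ Z ∈ matQuadCone E β := by
  simp only [matQuadCone, Set.mem_ofPred_eq, isSymm_conjStarAlgAut_iff, inv_conjStarAlgAut,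
    ← map_mul, trace_conjStarAlgAut]

theorem forall_matQuadCone_conjStarAlgAut_iff (E S : Matrix (Fin d) (Fin d) ℝ) (β : ℝ) :
    (∀ Z ∈ matQuadCone (φ E) β, Z ≠ 0 → 0 < (φ S * Z).trace) ↔
      ∀ Z ∈ matQuadCone E β, Z ≠ 0 → 0 < (S * Z).trace := by
  refine (EquivLike.surjective φ).forall.trans (forall_congr' fun Z => ?_)
  rw [conjStarAlgAut_mem_matQuadCone_iff, ← map_mul, trace_conjStarAlgAut,
    map_ne_zero_iff _ (EquivLike.injective φ)]

end Conjugation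

noncomputable def conjDiagonal (U : unitaryGroup (Fin d) ℝ) :
    (Fin d → ℝ) →ₐ[ℝ] Matrix (Fin d) (Fin d) ℝ :=
  (Unitary.conjStarAlgAut ℝ (Matrix (Fin d) (Fin d) ℝ) U).toAlgEquiv.toAlgHom.comp
    (diagonalAlgHom ℝ)

lemma conjDiagonal_apply (U : unitaryGroup (Fin d) ℝ) (f : Fin d → ℝ) :
    conjDiagonal U f = Unitary.conjStarAlgAut ℝ (Matrix (Fin d) (Fin d) ℝ) U (diagonal f) :=
  rfl

lemma trace_conjDiagonal (U : unitaryGroup (Fin d) ℝ) (f : Fin d → ℝ) :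
    (conjDiagonal U f).trace = ∑ i, f i := by
  rw [conjDiagonal_apply, trace_conjStarAlgAut, trace_diagonal]

theorem posDef_and_forall_matQuadCone_iff [NeZero d] (U : unitaryGroup (Fin d) ℝ) {β : ℝ}
    (hβ0 : 0 < β) (hβ1 : β < 1) {ε s : Fin d → ℝ} (hs : ∀ i, 0 < s i) :
    ((conjDiagonal U ε).PosDef ∧
        ∀ Z ∈ matQuadCone (conjDiagonal U ε) β, Z ≠ 0 → 0 < (conjDiagonal U s * Z).trace) ↔
      0 < ∑ i, (s * ε) i ∧ (d - β ^ 2) * ((s * ε) ⬝ᵥ (s * ε)) < (∑ i, (s * ε) i) ^ 2 := by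
  have hβd : β ^ 2 < Fintype.card (Fin d) := by
    have : (1 : ℝ) ≤ d := by exact_mod_cast NeZero.one_le
    rw [Fintype.card_fin]; nlinarith
  have hvec := forall_vecQuadCone_dotProduct_pos_iff hβ0 hβd (s * ε)
  rw [Fintype.card_fin] at hvec
  have hpd : (conjDiagonal U ε).PosDef ↔ ∀ i, 0 < ε i := by
    rw [conjDiagonal_apply, Unitary.conjStarAlgAut_apply,
      IsUnit.posDef_star_right_conjugate_iff Unitary.isUnit_coe, posDef_diagonal_iff]
  rw [hpd, conjDiagonal_apply, conjDiagonal_apply, forall_matQuadCone_conjStarAlgAut_iff]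
  constructor
  · rintro ⟨hε, h⟩
    exact hvec.mp ((forall_matQuadCone_diagonal_iff hβ0 hε s).mp h)
  · intro hv
    -- The basis vectors lie in the cone since `β ≤ 1`, so `s * ε > 0` and hence `ε > 0`.
    have hε : ∀ i, 0 < ε i := fun i =>
      (pos_iff_pos_of_mul_pos (pos_of_forall_vecQuadCone_dotProduct_pos hβ1.le (hvec.mpr hv) i)).mp
        (hs i)
    exact ⟨hε, (forall_matQuadCone_diagonal_iff hβ0 hε s).mpr (hvec.mpr hv)⟩

theorem posDef_and_forall_matQuadCone_iff_lt [NeZero d] (U : unitaryGroup (Fin d) ℝ) {β : ℝ}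
    (hβ0 : 0 < β) (hβ1 : β < 1) {μ s : Fin d → ℝ} (hs : ∀ i, 0 < s i) (hs1 : ∑ i, s i = 1)
    (hsμ : s ⬝ᵥ μ = 0) {t : ℝ} (ht : -1 < t) :
    ((conjDiagonal U ((1 + t)⁻¹ • (1 + t • μ))).PosDef ∧
        ∀ Z ∈ matQuadCone (conjDiagonal U ((1 + t)⁻¹ • (1 + t • μ))) β, Z ≠ 0 →
          0 < (conjDiagonal U s * Z).trace) ↔
      ((1 + t • μ) * s) ⬝ᵥ ((1 + t • μ) * s) < 1 / (d - β ^ 2) := by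
  set v := (1 + t • μ) * s
  have hsε : s * ((1 + t)⁻¹ • (1 + t • μ)) = (1 + t)⁻¹ • v := by
    ext i; simp only [v, Pi.mul_apply, Pi.smul_apply, smul_eq_mul]; ring
  have hv1 : ∑ i, v i = 1 := by
    change (1 + t • μ) ⬝ᵥ s = 1
    rw [add_dotProduct, smul_dotProduct, one_dotProduct, dotProduct_comm, hsμ, hs1, smul_zero,
      add_zero]
  rw [posDef_and_forall_matQuadCone_iff U hβ0 hβ1 hs, hsε, dotProduct_smul, smul_dotProduct]
  simp only [Pi.smul_apply, smul_eq_mul, ← mul_sum, hv1, mul_one]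
  have hr : 0 < (1 + t)⁻¹ := inv_pos.mpr (by linarith)
  have hdβ : 0 < (d : ℝ) - β ^ 2 := by
    have : (1 : ℝ) ≤ d := by exact_mod_cast NeZero.one_le
    nlinarith
  rw [lt_div_iff₀ hdβ, show (d - β ^ 2) * ((1 + t)⁻¹ * ((1 + t)⁻¹ * (v ⬝ᵥ v))) =
    (1 + t)⁻¹ ^ 2 * (v ⬝ᵥ v * (d - β ^ 2)) by ring, mul_lt_iff_lt_one_right (by positivity)]
  exact and_iff_right hr

end MatrixCone

section DualWeights

variable {ι : Type*} [Fintype ι] {α : ℝ} {μ : ι → ℝ}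

lemma sum_pos_of_eq_mul_sqrt (hα0 : 0 < α) (hμ0 : μ ≠ 0) (hμ : ∑ i, μ i = α * √(μ ⬝ᵥ μ)) :
    0 < ∑ i, μ i := by
  have := Real.sqrt_pos.mpr (dotProduct_self_pos hμ0)
  rw [hμ]; positivity

lemma sq_sum_of_eq_mul_sqrt (hμ : ∑ i, μ i = α * √(μ ⬝ᵥ μ)) :
    (∑ i, μ i) ^ 2 = α ^ 2 * (μ ⬝ᵥ μ) := by
  rw [hμ, mul_pow, Real.sq_sqrt (show 0 ≤ μ ⬝ᵥ μ from sum_nonneg fun i _ => mul_self_nonneg (μ i))]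

lemma card_sub_sq_pos [Nonempty ι] (hα0 : 0 < α) (hα1 : α < 1) : 0 < Fintype.card ι - α ^ 2 := by
  have : (1 : ℝ) ≤ Fintype.card ι := by exact_mod_cast Fintype.card_pos
  nlinarith

/-- The eigenvalues of `S` in an eigenbasis of `X` with eigenvalues `μ`. -/
noncomputable def dualWeights (α : ℝ) (μ : ι → ℝ) : ι → ℝ :=
  (Fintype.card ι - α ^ 2)⁻¹ • (1 - (α ^ 2 / ∑ i, μ i) • μ)

lemma dualWeights_apply (α : ℝ) (μ : ι → ℝ) (i : ι) :
    dualWeights α μ i = (Fintype.card ι - α ^ 2)⁻¹ * (1 - α ^ 2 / (∑ j, μ j) * μ i) :=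
  rfl

lemma sum_dualWeights (hT : ∑ i, μ i ≠ 0) (hn : (Fintype.card ι : ℝ) - α ^ 2 ≠ 0) :
    ∑ i, dualWeights α μ i = 1 := by
  rw [← one_dotProduct]
  simp only [dualWeights, dotProduct_smul, dotProduct_sub, one_dotProduct_one, smul_eq_mul]
  rw [one_dotProduct]
  field_simp

lemma dualWeights_dotProduct (hT : ∑ i, μ i ≠ 0) (hsq : (∑ i, μ i) ^ 2 = α ^ 2 * (μ ⬝ᵥ μ)) :
    dualWeights α μ ⬝ᵥ μ = 0 := by
  have hc : α ^ 2 / (∑ i, μ i) * (μ ⬝ᵥ μ) = ∑ i, μ i := by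
    field_simp
    linear_combination -hsq
  simp only [dualWeights, smul_dotProduct, sub_dotProduct, one_dotProduct, smul_eq_mul, hc,
    sub_self, mul_zero]

lemma dualWeights_dotProduct_self (hT : ∑ i, μ i ≠ 0) (hn : (Fintype.card ι : ℝ) - α ^ 2 ≠ 0)
    (hsq : (∑ i, μ i) ^ 2 = α ^ 2 * (μ ⬝ᵥ μ)) :
    dualWeights α μ ⬝ᵥ dualWeights α μ = (Fintype.card ι - α ^ 2)⁻¹ := by
  conv_lhs => enter [2]; rw [dualWeights]
  rw [dotProduct_smul, dotProduct_sub, dotProduct_one, dotProduct_smul, sum_dualWeights hT hn,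
    dualWeights_dotProduct hT hsq, smul_eq_mul, smul_zero, sub_zero, mul_one]

lemma dualWeights_pos (hα0 : 0 < α) (hα1 : α < 1) (hμ0 : μ ≠ 0)
    (hμ : ∑ i, μ i = α * √(μ ⬝ᵥ μ)) (i : ι) : 0 < dualWeights α μ i := by
  have hr : 0 < √(μ ⬝ᵥ μ) := Real.sqrt_pos.mpr (dotProduct_self_pos hμ0)
  have hμi : μ i ≤ √(μ ⬝ᵥ μ) := (le_abs_self _).trans <| Real.abs_le_sqrt <|
    (sq (μ i)).trans_le <| single_le_sum (f := fun j => μ j * μ j)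
      (fun j _ => mul_self_nonneg _) (mem_univ i)
  have hcμ : α ^ 2 / (∑ j, μ j) * μ i < 1 :=
    calc α ^ 2 / (∑ j, μ j) * μ i ≤ α ^ 2 / (∑ j, μ j) * √(μ ⬝ᵥ μ) := by rw [hμ]; gcongr
      _ = α := by rw [hμ]; field_simp
      _ < 1 := hα1
  have : Nonempty ι := ⟨i⟩
  rw [dualWeights_apply]
  exact mul_pos (inv_pos.mpr (card_sub_sq_pos hα0 hα1)) (by linarith)

lemma sum_dualWeights_sq_mul_neg (hα0 : 0 < α) (hα1 : α < 1) (hμ0 : μ ≠ 0)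
    (hμ : ∑ i, μ i = α * √(μ ⬝ᵥ μ)) : ∑ i, dualWeights α μ i ^ 2 * μ i < 0 := by
  set s := dualWeights α μ
  set k : ℝ := (Fintype.card ι - α ^ 2)⁻¹
  set c : ℝ := α ^ 2 / ∑ j, μ j
  have hs := dualWeights_pos hα0 hα1 hμ0 hμ
  have hT : 0 < ∑ j, μ j := sum_pos_of_eq_mul_sqrt hα0 hμ0 hμ
  have hk : 0 < k := by
    have : Nonempty ι := (Function.ne_iff.mp hμ0).nonempty
    exact inv_pos.mpr (card_sub_sq_pos hα0 hα1)
  -- `s i ^ 2 μ i = k (s i μ i) - k c (s i μ i ^ 2)`, and the first part sums to `k (s ⬝ᵥ μ) = 0`.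
  have hsplit : ∑ i, s i ^ 2 * μ i = k * (s ⬝ᵥ μ) - k * c * ∑ i, s i * μ i ^ 2 := by
    simp only [dotProduct, mul_sum, ← sum_sub_distrib]
    refine sum_congr rfl fun i _ => ?_
    have hsi : s i = k * (1 - c * μ i) := rfl
    rw [sq, mul_assoc]
    nth_rewrite 2 [hsi]
    ring
  obtain ⟨j, hj⟩ := Function.ne_iff.mp hμ0
  have hpos : 0 < ∑ i, s i * μ i ^ 2 :=
    sum_pos' (fun i _ => by have := hs i; positivity)
      ⟨j, mem_univ j, mul_pos (hs j) (pow_two_pos_of_ne_zero hj)⟩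
  rw [hsplit, dualWeights_dotProduct hT.ne' (sq_sum_of_eq_mul_sqrt hμ), mul_zero, zero_sub,
    neg_neg_iff_pos]
  have : 0 < c := by positivity
  positivity

lemma dotProduct_self_one_add_smul_mul (μ s : ι → ℝ) (t : ℝ) :
    ((1 + t • μ) * s) ⬝ᵥ ((1 + t • μ) * s) =
      (∑ i, (s i * μ i) ^ 2) * t ^ 2 + (2 * ∑ i, s i ^ 2 * μ i) * t + s ⬝ᵥ s := by
  simp only [dotProduct, sum_mul, mul_sum, ← sum_add_distrib]
  refine sum_congr rfl fun i _ => ?_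
  simp only [Pi.mul_apply, Pi.add_apply, Pi.one_apply, Pi.smul_apply, smul_eq_mul]
  ring

lemma deriv_quadratic_zero (a b c : ℝ) : deriv (fun t => a * t ^ 2 + b * t + c) 0 = b := by
  simpa using ((((hasDerivAt_pow 2 (0 : ℝ)).const_mul a).add
    ((hasDerivAt_id (0 : ℝ)).const_mul b)).add_const c).deriv

theorem quadratic_of_dualWeights (hα0 : 0 < α) (hα1 : α < 1) (hμ0 : μ ≠ 0)
    (hμ : ∑ i, μ i = α * √(μ ⬝ᵥ μ)) {q : ℝ → ℝ}
    (hq : ∀ t, q t = ((1 + t • μ) * dualWeights α μ) ⬝ᵥ ((1 + t • μ) * dualWeights α μ)) :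
    (∃ a b c : ℝ, 0 < a ∧ ∀ t, q t = a * t ^ 2 + b * t + c) ∧
      q 0 = 1 / (Fintype.card ι - α ^ 2) ∧ deriv q 0 < 0 := by
  set s := dualWeights α μ
  have hT := sum_pos_of_eq_mul_sqrt hα0 hμ0 hμ
  have : Nonempty ι := (Function.ne_iff.mp hμ0).nonempty
  have hquad : ∀ t, q t = (∑ i, (s i * μ i) ^ 2) * t ^ 2 + (2 * ∑ i, s i ^ 2 * μ i) * t +
      (Fintype.card ι - α ^ 2)⁻¹ := fun t => by
    rw [hq, dotProduct_self_one_add_smul_mul, dualWeights_dotProduct_self hT.ne'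
      (card_sub_sq_pos hα0 hα1).ne' (sq_sum_of_eq_mul_sqrt hμ)]
  obtain ⟨j, hj⟩ := Function.ne_iff.mp hμ0
  have ha : 0 < ∑ i, (s i * μ i) ^ 2 := sum_pos' (fun i _ => sq_nonneg _)
    ⟨j, mem_univ j, pow_two_pos_of_ne_zero (mul_ne_zero (dualWeights_pos hα0 hα1 hμ0 hμ j).ne' hj)⟩
  refine ⟨⟨_, _, _, ha, hquad⟩, by simp [hquad], ?_⟩
  rw [funext hquad, deriv_quadratic_zero]
  linarith [sum_dualWeights_sq_mul_neg hα0 hα1 hμ0 hμ]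

end DualWeights

theorem stmt13_general {d : ℕ} (α : ℝ) (hα : 0 < α) (hα1 : α < 1)
    (X : Matrix (Fin d) (Fin d) ℝ) (hX0 : X ≠ 0) (hXs : X.IsSymm)
    (hXb : X.trace = α * Real.sqrt ((X * X).trace))
    (S : Matrix (Fin d) (Fin d) ℝ)
    (hS : S = ((d : ℝ) - α ^ 2)⁻¹ • ((1 : Matrix (Fin d) (Fin d) ℝ) - (α ^ 2 / X.trace) • X))
    (q : ℝ → ℝ)
    (hq : ∀ t : ℝ, q t =
      ((((1 : Matrix (Fin d) (Fin d) ℝ) + t • X) * S) *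
        (((1 : Matrix (Fin d) (Fin d) ℝ) + t • X) * S)).trace)
    (E : ℝ → Matrix (Fin d) (Fin d) ℝ)
    (hE : ∀ t : ℝ, E t = (1 + t)⁻¹ • ((1 : Matrix (Fin d) (Fin d) ℝ) + t • X)) :
    ((∃ a b c : ℝ, 0 < a ∧ ∀ t : ℝ, q t = a * t ^ 2 + b * t + c) ∧
      q 0 = 1 / ((d : ℝ) - α ^ 2) ∧ deriv q 0 < 0) ∧
    (∀ t : ℝ, -1 < t → ∀ β : ℝ, 0 < β → β < 1 →
      (((E t).PosDef ∧ ∀ Z ∈ matQuadCone (E t) β, Z ≠ 0 → 0 < (S * Z).trace) ↔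
        q t < 1 / ((d : ℝ) - β ^ 2))) := by
  have hXh : X.IsHermitian := isHermitian_iff_isSymm.mpr hXs
  set U := hXh.eigenvectorUnitary
  set μ := hXh.eigenvalues
  have hX : X = conjDiagonal U μ := by simpa [conjDiagonal_apply] using hXh.spectral_theorem
  have hμ0 : μ ≠ 0 := fun h => hX0 (by rw [hX, h, map_zero])
  have hμ : ∑ i, μ i = α * √(μ ⬝ᵥ μ) := by
    rwa [hX, ← map_mul, trace_conjDiagonal, trace_conjDiagonal] at hXb
  have : NeZero d := ⟨by rintro rfl; exact hμ0 (Subsingleton.elim _ _)⟩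
  set s := dualWeights α μ
  have hS' : S = conjDiagonal U s := by
    rw [hS, hX, trace_conjDiagonal]
    simp only [s, dualWeights, map_smul, map_sub, map_one, Fintype.card_fin]
  have hq' : ∀ t, q t = ((1 + t • μ) * s) ⬝ᵥ ((1 + t • μ) * s) := fun t => by
    rw [hq, hS', hX, ← map_one (conjDiagonal U), ← map_smul, ← map_add, ← map_mul, ← map_mul,
      trace_conjDiagonal]
    rfl
  have hE' : ∀ t, E t = conjDiagonal U ((1 + t)⁻¹ • (1 + t • μ)) := fun t => by
    rw [hE, hX]
    simp only [map_smul, map_add, map_one]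
  have hT := sum_pos_of_eq_mul_sqrt hα hμ0 hμ
  refine ⟨by simpa using quadratic_of_dualWeights hα hα1 hμ0 hμ hq', fun t ht β hβ0 hβ1 => ?_⟩
  rw [hE', hS', hq']
  exact posDef_and_forall_matQuadCone_iff_lt U hβ0 hβ1 (dualWeights_pos hα hα1 hμ0 hμ)
    (sum_dualWeights hT.ne' (by simpa using (card_sub_sq_pos (ι := Fin d) hα hα1).ne'))
    (dualWeights_dotProduct hT.ne' (sq_sum_of_eq_mul_sqrt hμ)) ht

/-- Proposition 4.5 in RS14 for `E = I`.
With `X`, `S`, `q(t) = tr(((I+tX)S)²)` and `E(t) = (1/(1+t))(I+tX)` as given: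
(i) `q` is a strictly convex quadratic polynomial with `q(0) = 1/(d-α²)` and `q'(0) < 0`;
(ii) for every `t > -1` and `0 < β < 1`, `E(t) ≻ 0` and `S ∈ int(K_{E(t)}(β)*)`
(i.e. `tr(SZ) > 0` for every nonzero `Z ∈ K_{E(t)}(β)`) iff `q(t) < 1/(d-β²)`. -/
theorem stmt13 {d : ℕ} (hd : 2 ≤ d) (α : ℝ) (hα : 0 < α) (hα1 : α < 1)
    (X : Matrix (Fin d) (Fin d) ℝ) (hX0 : X ≠ 0) (hXs : X.IsSymm)
    (hXb : X.trace = α * Real.sqrt ((X * X).trace))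
    (S : Matrix (Fin d) (Fin d) ℝ)
    (hS : S = ((d : ℝ) - α ^ 2)⁻¹ • ((1 : Matrix (Fin d) (Fin d) ℝ) - (α ^ 2 / X.trace) • X))
    (q : ℝ → ℝ)
    (hq : ∀ t : ℝ, q t =
      ((((1 : Matrix (Fin d) (Fin d) ℝ) + t • X) * S) *
        (((1 : Matrix (Fin d) (Fin d) ℝ) + t • X) * S)).trace)
    (E : ℝ → Matrix (Fin d) (Fin d) ℝ)
    (hE : ∀ t : ℝ, E t = (1 + t)⁻¹ • ((1 : Matrix (Fin d) (Fin d) ℝ) + t • X)) :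
    ((∃ a b c : ℝ, 0 < a ∧ ∀ t : ℝ, q t = a * t ^ 2 + b * t + c) ∧
      q 0 = 1 / ((d : ℝ) - α ^ 2) ∧ deriv q 0 < 0) ∧
    (∀ t : ℝ, -1 < t → ∀ β : ℝ, 0 < β → β < 1 →
      (((E t).PosDef ∧ ∀ Z ∈ matQuadCone (E t) β, Z ≠ 0 → 0 < (S * Z).trace) ↔
        q t < 1 / ((d : ℝ) - β ^ 2))) :=
  stmt13_general α hα hα1 X hX0 hXs hXb S hS q hq E hE
end

section
/- Let d be a positive integer, κ ∈ (0,1), and δ ∈ (0,1). Let (gap_i)_{i≥0} be a sequence of positive reals with gap_0 ≤ 1, gap_{i+1} ≤ gap_i for every i ≥ 0, and such that for every i ≥ 0, gap_{i+1}/gap_i ≤ 1 − κ/(κ+√d) or gap_{i+2}/gap_{i+1} ≤ 1 − κ/(κ+√d). Then for every integer t ≥ 2 + (2(κ+√d)/κ)·ln(1/δ), one has gap_t ≤ δ. In particular, the duality gap drops below δ after O(√d · log(1/δ)) iterations. -/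
/-!
If at least one of any two consecutive steps contracts by `1 - s`, then monotonicity turns this
into `gap (i + 2) ≤ (1 - s) * gap i`, so `gap t ≤ (1 - s) ^ ⌊t/2⌋ ≤ exp (-s ⌊t/2⌋)`. The bound on
`t` makes `s ⌊t/2⌋ ≥ log (1/δ)`.
-/

open Real

theorem le_mul_of_div_le_or_div_le {u : ℕ → ℝ} {r : ℝ} (hr : 0 ≤ r) (hpos : ∀ i, 0 < u i)
    (hmono : ∀ i, u (i + 1) ≤ u i) (i : ℕ)
    (h : u (i + 1) / u i ≤ r ∨ u (i + 2) / u (i + 1) ≤ r) :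
    u (i + 2) ≤ r * u i := by
  rcases h with h | h
  · calc u (i + 2) ≤ u (i + 1) := hmono (i + 1)
      _ ≤ r * u i := (div_le_iff₀ (hpos i)).mp h
  · calc u (i + 2) ≤ r * u (i + 1) := (div_le_iff₀ (hpos (i + 1))).mp h
      _ ≤ r * u i := mul_le_mul_of_nonneg_left (hmono i) hr

theorem Antitone.le_pow_div_two_mul {u : ℕ → ℝ} {r : ℝ} (hu : Antitone u) (hr : 0 ≤ r)
    (hstep : ∀ i, u (i + 2) ≤ r * u i) (t : ℕ) :
    u t ≤ r ^ (t / 2) * u 0 := by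
  have heven : ∀ k, u (2 * k) ≤ r ^ k * u 0 := by
    intro k
    induction k with
    | zero => simp
    | succ k ih =>
      calc u (2 * (k + 1)) ≤ r * u (2 * k) := hstep (2 * k)
        _ ≤ r * (r ^ k * u 0) := mul_le_mul_of_nonneg_left ih hr
        _ = r ^ (k + 1) * u 0 := by ring
  exact (hu (Nat.mul_div_le t 2)).trans (heven (t / 2))

theorem one_sub_pow_div_two_le {s δ : ℝ} (hs0 : 0 < s) (hs1 : s ≤ 1) (hδ : 0 < δ) {t : ℕ}
    (ht : 2 + 2 / s * log (1 / δ) ≤ t) :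
    (1 - s) ^ (t / 2) ≤ δ := by
  set k := t / 2
  have htk : (t : ℝ) ≤ 2 * k + 1 := by exact_mod_cast (show t ≤ 2 * k + 1 by omega)
  have hlog : log (1 / δ) ≤ s * k := by
    have : 2 / s * log (1 / δ) = 2 * (log (1 / δ) / s) := by ring
    have hdiv : log (1 / δ) / s ≤ k := by linarith
    nlinarith [(div_le_iff₀ hs0).mp hdiv]
  calc (1 - s) ^ k ≤ exp (-s) ^ k := by
        gcongr
        linarith [add_one_le_exp (-s)]
    _ = exp (-(s * k)) := by rw [← exp_nat_mul]; ring_nf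
    _ ≤ exp (-log (1 / δ)) := exp_le_exp.mpr (neg_le_neg hlog)
    _ = δ := by rw [one_div, log_inv, neg_neg, exp_log hδ]

theorem stmt16_general (d : ℕ) (κ δ : ℝ)
    (hκ0 : 0 < κ) (hδ0 : 0 < δ)
    (gap : ℕ → ℝ) (hpos : ∀ i, 0 < gap i) (h0 : gap 0 ≤ 1)
    (hmono : ∀ i, gap (i + 1) ≤ gap i)
    (hcontr : ∀ i, gap (i + 1) / gap i ≤ 1 - κ / (κ + Real.sqrt d) ∨
      gap (i + 2) / gap (i + 1) ≤ 1 - κ / (κ + Real.sqrt d)) :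
    ∀ t : ℕ, 2 + 2 * (κ + Real.sqrt d) / κ * Real.log (1 / δ) ≤ (t : ℝ) → gap t ≤ δ := by
  intro t ht
  have hden : 0 < κ + √d := by positivity
  set s := κ / (κ + √d) with hs
  have hs0 : 0 < s := by positivity
  have hs1 : s ≤ 1 := (div_le_one hden).mpr (by linarith [sqrt_nonneg d])
  have hstep (i : ℕ) : gap (i + 2) ≤ (1 - s) * gap i :=
    le_mul_of_div_le_or_div_le (by linarith) hpos hmono i (hcontr i)
  have ht' : 2 + 2 / s * log (1 / δ) ≤ t := by
    rwa [hs, div_div_eq_mul_div]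
  calc gap t ≤ (1 - s) ^ (t / 2) * gap 0 :=
        (antitone_nat_of_succ_le hmono).le_pow_div_two_mul (by linarith) hstep t
    _ ≤ (1 - s) ^ (t / 2) := mul_le_of_le_one_right (pow_nonneg (by linarith) _) h0
    _ ≤ δ := one_sub_pow_div_two_le hs0 hs1 hδ0 ht'

/-- iteration count of the affine-scaling IPM, Lemma `iterations`.
If the duality gaps `gap_i` are positive, nonincreasing, start at most `1`, and among any two
consecutive steps at least one contracts the gap by a factor at most `1 - κ/(κ+√d)`, then
`gap_t ≤ δ` for every `t ≥ 2 + (2(κ+√d)/κ) ln(1/δ)`. -/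
theorem stmt16 (d : ℕ) (hd : 1 ≤ d) (κ δ : ℝ)
    (hκ0 : 0 < κ) (hκ1 : κ < 1) (hδ0 : 0 < δ) (hδ1 : δ < 1)
    (gap : ℕ → ℝ) (hpos : ∀ i, 0 < gap i) (h0 : gap 0 ≤ 1)
    (hmono : ∀ i, gap (i + 1) ≤ gap i)
    (hcontr : ∀ i, gap (i + 1) / gap i ≤ 1 - κ / (κ + Real.sqrt d) ∨
      gap (i + 2) / gap (i + 1) ≤ 1 - κ / (κ + Real.sqrt d)) :
    ∀ t : ℕ, 2 + 2 * (κ + Real.sqrt d) / κ * Real.log (1 / δ) ≤ (t : ℝ) → gap t ≤ δ :=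
  stmt16_general d κ δ hκ0 hδ0 gap hpos h0 hmono hcontr
end
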